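/- arXiv:1709.06337 — 8 statements merged into one kernel-verified Lean document; each statement's English description precedes it below -/
import Mathlib

section
/- Let P be an integer, and set A = P² + 2 and B = −P² + 1. For every positive integer n with n > (|A| + |B|)³, if σ₂(n) − n² = A·n + B (as integers), then there exists an integer k ≥ 1 such that n = U_{2k−1}(P,−1) · U_{2k+1}(P,−1), where both U_{2k−1}(P,−1) and U_{2k+1}(P,−1) are prime numbers. -/
/-- Lucas sequence of the first kind: `U 0 = 0`, `U 1 = 1`,
`U (n+2) = P * U (n+1) - Q * U n`. -/
def lucasU (P Q : ℤ) : ℕ → ℤ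
  | 0 => 0
  | 1 => 1
  | n + 2 => P * lucasU P Q (n + 1) - Q * lucasU P Q n

lemma lucasU_zero (P Q : ℤ) : lucasU P Q 0 = 0 := rfl
lemma lucasU_one (P Q : ℤ) : lucasU P Q 1 = 1 := rfl
lemma lucasU_add_two (P Q : ℤ) (m : ℕ) :
    lucasU P Q (m + 2) = P * lucasU P Q (m + 1) - Q * lucasU P Q m := rfl

lemma lucasU_three (P : ℤ) : lucasU P (-1) 3 = P ^ 2 + 1 := by
  have h1 := lucasU_add_two P (-1) 1
  have h0 := lucasU_add_two P (-1) 0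
  simp [lucasU_zero, lucasU_one] at h0 h1 ⊢
  rw [show (3:ℕ) = 1 + 2 from rfl, h1, h0]
  ring

lemma lucasU_add_four (P : ℤ) (m : ℕ) :
    lucasU P (-1) (m + 4) = (P ^ 2 + 2) * lucasU P (-1) (m + 2) - lucasU P (-1) m := by
  have h2 := lucasU_add_two P (-1) m
  have h3 := lucasU_add_two P (-1) (m + 1)
  have h4 := lucasU_add_two P (-1) (m + 2)
  rw [show m + 1 + 2 = m + 3 from by omega, show m + 1 + 1 = m + 2 from by omega] at h3
  rw [show m + 2 + 2 = m + 4 from by omega, show m + 2 + 1 = m + 3 from by omega] at h4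
  linear_combination h4 + P * h3 - h2

lemma descent (P : ℤ) (hP : P ≠ 0) : ∀ N : ℕ, ∀ a b : ℤ, 0 < a → a ≤ b → b ≤ (N : ℤ) →
    a ^ 2 + b ^ 2 + P ^ 2 = (P ^ 2 + 2) * (a * b) →
    (a = 1 ∧ b = 1) ∨ ∃ j : ℕ, a = lucasU P (-1) (2 * j + 1) ∧ b = lucasU P (-1) (2 * j + 3) := by
  have hP2 : 1 ≤ P ^ 2 := by
    have h1 : P ^ 2 ≠ 0 := pow_ne_zero 2 hP
    have h2 := sq_nonneg P
    omega
  intro N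
  induction N with
  | zero =>
    intro a b ha hab hbN _
    exfalso
    have : (0:ℤ) < b := lt_of_lt_of_le ha hab
    simp at hbN
    omega
  | succ N ih =>
    intro a b ha hab hbN heq
    rcases eq_or_lt_of_le hab with rfl | hlt
    · left
      have ha2 : a ^ 2 = 1 := by nlinarith
      have : a = 1 := by nlinarith
      exact ⟨this, this⟩
    · have hb : (0:ℤ) < b := lt_of_lt_of_le ha hab
      set a' : ℤ := (P ^ 2 + 2) * a - b with ha'def
      have hprod : a' * b = a ^ 2 + P ^ 2 := by
        rw [ha'def]; linear_combination -heq
      have ha'pos : 0 < a' := by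
        by_contra h
        push_neg at h
        nlinarith
      have hkey : (a' - a) * (b - a) = P ^ 2 * (1 - a ^ 2) := by
        rw [ha'def]; linear_combination -heq
      have ha'le : a' ≤ a := by
        by_contra h
        push_neg at h
        have h1 : 0 < (a' - a) * (b - a) := mul_pos (by linarith) (by linarith)
        have h2 : 1 ≤ a ^ 2 := by nlinarith
        have h3 : P ^ 2 * (1 - a ^ 2) ≤ 0 :=
          mul_nonpos_of_nonneg_of_nonpos (sq_nonneg P) (by linarith)
        linarith
      have haN : a ≤ (N : ℤ) := by
        push_cast at hbN
        omega
      have heq' : a' ^ 2 + a ^ 2 + P ^ 2 = (P ^ 2 + 2) * (a' * a) := by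
        rw [ha'def]; linear_combination heq
      rcases ih a' a ha'pos ha'le haN heq' with ⟨h1, h2⟩ | ⟨j, hj1, hj2⟩
      · right
        refine ⟨0, ?_, ?_⟩
        · rw [h2]; rfl
        · have : b = P ^ 2 + 1 := by rw [h2] at ha'def; omega
          rw [this, show 2 * 0 + 3 = 3 from rfl, lucasU_three]
      · right
        refine ⟨j + 1, ?_, ?_⟩
        · rw [show 2 * (j + 1) + 1 = 2 * j + 3 from by omega]; exact hj2
        · rw [show 2 * (j + 1) + 3 = 2 * j + 1 + 4 from by omega, lucasU_add_four,
            show 2 * j + 1 + 2 = 2 * j + 3 from by omega, ← hj1, ← hj2]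
          linarith [ha'def]

lemma sigma_two_prime {p : ℕ} (hp : p.Prime) : ArithmeticFunction.sigma 2 p = 1 + p ^ 2 := by
  rw [ArithmeticFunction.sigma_apply, hp.divisors, Finset.sum_pair hp.one_lt.ne]
  norm_num

set_option maxHeartbeats 2000000 in
theorem stmt_0 (P : ℤ) (A B : ℤ) (hA : A = P ^ 2 + 2) (hB : B = -P ^ 2 + 1)
    (n : ℕ) (hn : 0 < n) (hbig : (n : ℤ) > (|A| + |B|) ^ 3)
    (heq : ((ArithmeticFunction.sigma 2) n : ℤ) - (n : ℤ) ^ 2 = A * n + B) :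
    ∃ k : ℕ, 1 ≤ k ∧
      (n : ℤ) = lucasU P (-1) (2 * k - 1) * lucasU P (-1) (2 * k + 1) ∧
      Prime (lucasU P (-1) (2 * k - 1)) ∧ Prime (lucasU P (-1) (2 * k + 1)) := by
  have hc0 : (0:ℤ) ≤ P ^ 2 := sq_nonneg P
  obtain ⟨C, hCdef⟩ : ∃ C : ℤ, C = |A| + |B| := ⟨_, rfl⟩
  rw [← hCdef] at hbig
  have habsA : |A| = A := abs_of_pos (by rw [hA]; linarith)
  have hCge : P ^ 2 + 2 ≤ C := by
    have := abs_nonneg B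
    rw [hCdef, habsA, hA]; linarith
  have hC3 : 3 ≤ C := by
    rcases eq_or_ne P 0 with rfl | hP
    · simp [hCdef, hA, hB]
    · have h1 : P ^ 2 ≠ 0 := pow_ne_zero 2 hP
      omega
  have hbig' : C ^ 3 < (n:ℤ) := hbig
  have hn28 : (27:ℤ) < (n:ℤ) := by
    have h27 : (27:ℤ) = 3 ^ 3 := by norm_num
    have := pow_le_pow_left₀ (by norm_num : (0:ℤ) ≤ 3) hC3 3
    linarith
  have hn1 : 1 < n := by exact_mod_cast (by linarith : (1:ℤ) < (n:ℤ))
  -- bound on proper divisors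
  have hbound : ∀ d : ℕ, d ∣ n → d ≠ n → (d:ℤ) ^ 2 ≤ A * n + B := by
    intro d hd hdn
    have hmem : ({d, n} : Finset ℕ) ⊆ n.divisors := by
      have hd' : d ∈ n.divisors := Nat.mem_divisors.mpr ⟨hd, by omega⟩
      have hn' : n ∈ n.divisors := Nat.mem_divisors.mpr ⟨dvd_refl n, by omega⟩
      intro x hx
      simp only [Finset.mem_insert, Finset.mem_singleton] at hx
      rcases hx with rfl | rfl
      exacts [hd', hn']
    have hsum : ∑ x ∈ ({d, n} : Finset ℕ), x ^ 2 ≤ ArithmeticFunction.sigma 2 n := by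
      rw [ArithmeticFunction.sigma_apply]
      exact Finset.sum_le_sum_of_subset hmem
    rw [Finset.sum_pair hdn] at hsum
    have hsum' : (d:ℤ) ^ 2 + (n:ℤ) ^ 2 ≤ ((ArithmeticFunction.sigma 2 n : ℕ) : ℤ) := by
      exact_mod_cast hsum
    linarith
  have hAnB : A * n + B ≤ C * n := by
    have h1 : A * n ≤ |A| * n := mul_le_mul_of_nonneg_right (le_abs_self A) (by positivity)
    have h3 : |B| ≤ |B| * n :=
      le_mul_of_one_le_right (abs_nonneg B) (by exact_mod_cast hn)
    have h2 : B ≤ |B| := le_abs_self B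
    have : C * n = |A| * n + |B| * n := by rw [hCdef]; ring
    linarith
  -- factor n
  have hn0 : n ≠ 1 := by omega
  obtain ⟨p, hpdef⟩ : ∃ p, p = n.minFac := ⟨_, rfl⟩
  have hp : p.Prime := hpdef ▸ Nat.minFac_prime hn0
  have hp2 : 2 ≤ p := hp.two_le
  obtain ⟨m, hm⟩ : p ∣ n := hpdef ▸ n.minFac_dvd
  have hmdvd : m ∣ n := Dvd.intro_left p hm.symm
  have hmpos : 0 < m := by
    rcases Nat.eq_zero_or_pos m with rfl | h
    · omega
    · exact h
  have hmn : m ≠ n := by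
    intro h
    rw [h] at hm
    nlinarith
  have hmb : (m:ℤ) ^ 2 ≤ C * n := le_trans (hbound m hmdvd hmn) hAnB
  have hmCp : (m:ℤ) ≤ C * p := by
    have hcast : (n:ℤ) = (p:ℤ) * m := by exact_mod_cast hm
    nlinarith [hmb, hcast, (by exact_mod_cast hmpos : (0:ℤ) < (m:ℤ))]
  have hnCp2 : (n:ℤ) ≤ C * p ^ 2 := by
    have hcast : (n:ℤ) = (p:ℤ) * m := by exact_mod_cast hm
    have hppos : (0:ℤ) < (p:ℤ) := by exact_mod_cast hp.pos
    nlinarith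
  have hpC : C < (p:ℤ) := by
    by_contra h
    push_neg at h
    have hppos : (0:ℤ) < (p:ℤ) := by exact_mod_cast hp.pos
    have h1 : (p:ℤ) ^ 2 ≤ C ^ 2 := pow_le_pow_left₀ (le_of_lt hppos) h 2
    have h2 : C * (p:ℤ) ^ 2 ≤ C * C ^ 2 := mul_le_mul_of_nonneg_left h1 (by linarith)
    have h3 : C * C ^ 2 = C ^ 3 := by ring
    linarith
  -- case m = 1 : n prime
  rcases eq_or_ne m 1 with rfl | hm1
  · exfalso
    rw [mul_one] at hm
    have hnp : n.Prime := hm ▸ hp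
    rw [sigma_two_prime hnp] at heq
    push_cast at heq
    rw [hA, hB] at heq
    have hn1' : (1:ℤ) ≤ (n:ℤ) := by exact_mod_cast hn
    have hfin : (P ^ 2 + 2) * (n:ℤ) = P ^ 2 := by linear_combination -heq
    nlinarith [mul_nonneg (by positivity : (0:ℤ) ≤ P ^ 2 + 2) (by linarith : (0:ℤ) ≤ (n:ℤ) - 1)]
  -- m > 1
  have hm1' : 1 < m := by omega
  obtain ⟨q, hqdef⟩ : ∃ q, q = m.minFac := ⟨_, rfl⟩
  have hq : q.Prime := hqdef ▸ Nat.minFac_prime (by omega)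
  obtain ⟨r, hr⟩ : q ∣ m := hqdef ▸ m.minFac_dvd
  have hq2 : 2 ≤ q := hq.two_le
  have hrpos : 0 < r := by
    rcases Nat.eq_zero_or_pos r with rfl | h
    · omega
    · exact h
  have hpq : p ≤ q := by
    rw [hpdef]
    exact Nat.minFac_le_of_dvd hq2 (hqdef ▸ dvd_trans m.minFac_dvd hmdvd)
  rcases eq_or_ne r 1 with rfl | hr1
  swap
  · -- r > 1 : at least three prime factors, size contradiction
    exfalso
    have hr2 : 2 ≤ r := by omega
    have hrdvd : r ∣ n := dvd_trans (Dvd.intro_left q hr.symm) hmdvd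
    have hpr : p ≤ r.minFac := by
      rw [hpdef]
      exact Nat.minFac_le_of_dvd (Nat.minFac_prime (by omega)).two_le
        (dvd_trans r.minFac_dvd hrdvd)
    have hrp : p ≤ r := le_trans hpr (Nat.minFac_le (by omega))
    have hcube : p ^ 3 ≤ n := by
      calc p ^ 3 = p * (p * p) := by ring
      _ ≤ p * (q * r) := by
        apply Nat.mul_le_mul_left
        exact Nat.mul_le_mul hpq hrp
      _ = n := by rw [hm, hr]
    have hcube' : (p:ℤ) ^ 3 ≤ (n:ℤ) := by exact_mod_cast hcube
    have h4 : C * (p:ℤ) ^ 2 < (p:ℤ) * (p:ℤ) ^ 2 := by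
      apply mul_lt_mul_of_pos_right hpC
      positivity
    have h5 : (p:ℤ) * (p:ℤ) ^ 2 = (p:ℤ) ^ 3 := by ring
    linarith
  -- n = p * q
  rw [mul_one] at hr
  have hmq : m = q := hr
  rcases eq_or_ne q p with hqp | hne
  · -- n = p^2
    exfalso
    have hn2 : n = p ^ 2 := by rw [hm, hmq, hqp]; ring
    rw [hn2, ArithmeticFunction.sigma_apply_prime_pow hp] at heq
    rw [Finset.sum_range_succ, Finset.sum_range_succ, Finset.sum_range_one] at heq
    norm_num at heq
    push_cast at heq
    rw [hA, hB] at heq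
    have hp2' : (2:ℤ) ≤ (p:ℤ) := by exact_mod_cast hp2
    have hfin : (P ^ 2 + 1) * (p:ℤ) ^ 2 = P ^ 2 := by linear_combination -heq
    have hp4 : (4:ℤ) ≤ (p:ℤ) ^ 2 := by nlinarith
    have h5 : (P ^ 2 + 1) * 4 ≤ (P ^ 2 + 1) * (p:ℤ) ^ 2 :=
      mul_le_mul_of_nonneg_left hp4 (by positivity)
    linarith
  -- p < q distinct primes
  have hplt : p < q := lt_of_le_of_ne hpq (Ne.symm hne)
  have hcop : Nat.Coprime p q := (Nat.coprime_primes hp hq).mpr (Ne.symm hne)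
  have hnpq : n = p * q := by rw [hm, hmq]
  have hσ : ArithmeticFunction.sigma 2 n = (1 + p ^ 2) * (1 + q ^ 2) := by
    rw [hnpq, ArithmeticFunction.isMultiplicative_sigma.map_mul_of_coprime hcop,
      sigma_two_prime hp, sigma_two_prime hq]
  rw [hσ] at heq
  rw [hnpq] at heq
  push_cast at heq
  rw [hA, hB] at heq
  have hkey : (p:ℤ) ^ 2 + (q:ℤ) ^ 2 + P ^ 2 = (P ^ 2 + 2) * ((p:ℤ) * (q:ℤ)) := by
    linear_combination heq
  have hppos : (0:ℤ) < (p:ℤ) := by exact_mod_cast hp.pos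
  have hpltq : (p:ℤ) < (q:ℤ) := by exact_mod_cast hplt
  have hP : P ≠ 0 := by
    rintro rfl
    simp at hkey
    nlinarith [hkey, hpltq, hppos]
  rcases descent P hP q (p:ℤ) (q:ℤ) hppos (le_of_lt hpltq) le_rfl hkey with ⟨h1, _⟩ | ⟨j, hj1, hj2⟩
  · exfalso
    have : (2:ℤ) ≤ (p:ℤ) := by exact_mod_cast hp2
    omega
  · refine ⟨j + 1, by omega, ?_, ?_, ?_⟩
    · rw [show 2 * (j + 1) - 1 = 2 * j + 1 from by omega,
        show 2 * (j + 1) + 1 = 2 * j + 3 from by omega, ← hj1, ← hj2]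
      exact_mod_cast congrArg (Nat.cast : ℕ → ℤ) hnpq
    · rw [show 2 * (j + 1) - 1 = 2 * j + 1 from by omega, ← hj1]
      exact Nat.prime_iff_prime_int.mp hp
    · rw [show 2 * (j + 1) + 1 = 2 * j + 3 from by omega, ← hj2]
      exact Nat.prime_iff_prime_int.mp hq
end

section
/- Let P be an integer, and set A = P² − 2 and B = P² + 1. For every positive integer n with n > (|A| + |B|)³, if σ₂(n) − n² = A·n + B (as integers), then there exists an integer k ≥ 1 such that n = U_{k−1}(P,1) · U_{k+1}(P,1), where both U_{k−1}(P,1) and U_{k+1}(P,1) are prime numbers. -/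
lemma lucasU_step (P Q : ℤ) (n : ℕ) :
    lucasU P Q (n + 2) = P * lucasU P Q (n + 1) - Q * lucasU P Q n := rfl

lemma lucasU_jump (W : ℤ) (j : ℕ) :
    lucasU W 1 (j + 4) = (W ^ 2 - 2) * lucasU W 1 (j + 2) - lucasU W 1 j := by
  rw [lucasU_step, lucasU_step, lucasU_step]; ring

lemma descent_s2 (W : ℤ) (hW : 2 ≤ W) :
    ∀ q : ℕ, ∀ p : ℕ, p ≤ q → ((p : ℤ) + q) ^ 2 = W ^ 2 * (p * q + 1) →
    ∃ k : ℕ, 1 ≤ k ∧ (p : ℤ) = lucasU W 1 (k - 1) ∧ (q : ℤ) = lucasU W 1 (k + 1) := by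
  intro q
  induction q using Nat.strong_induction_on with
  | _ q IH =>
    intro p hpq hE
    rcases Nat.eq_zero_or_pos p with hp0 | hp1
    · -- base case p = 0 : q = W
      subst hp0
      have hq : (q : ℤ) = W := by
        have h2 : (q : ℤ) ^ 2 = W ^ 2 := by push_cast at hE ⊢; nlinarith
        have hq0 : (0 : ℤ) ≤ q := Int.natCast_nonneg q
        nlinarith
      refine ⟨1, le_refl 1, by simp [lucasU], ?_⟩
      rw [hq]
      rw [show (1 + 1 : ℕ) = 0 + 2 from rfl, lucasU_step]; simp [lucasU]
    · -- p ≥ 1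
      have hp1' : (1 : ℤ) ≤ p := by exact_mod_cast hp1
      have hq1 : (1 : ℤ) ≤ q := le_trans hp1' (by exact_mod_cast hpq)
      have hplt : (p : ℤ) < q := by
        rcases lt_or_eq_of_le hpq with h | h
        · exact_mod_cast h
        · exfalso; subst h
          have hW2 : (4:ℤ) ≤ W ^ 2 := by nlinarith
          nlinarith [sq_nonneg (p:ℤ)]
      set q' : ℤ := (W ^ 2 - 2) * p - q with hq'def
      have hmul : (q : ℤ) * q' = p ^ 2 - W ^ 2 := by rw [hq'def]; nlinarith
      have hE' : (q' + (p : ℤ)) ^ 2 = W ^ 2 * (q' * p + 1) := by rw [hq'def]; nlinarith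
      rcases lt_or_ge q' 0 with hneg | hpos
      · -- then p = 1, q = W^2 - 1, answer k = 2
        have hqle : (q : ℤ) ≤ W ^ 2 - p ^ 2 := by nlinarith
        have hp1eq : (p : ℤ) = 1 := by nlinarith [sq_nonneg ((p : ℤ) - 1)]
        have hqeq : (q : ℤ) = W ^ 2 - 1 := by nlinarith
        refine ⟨2, by norm_num, by simpa [lucasU] using hp1eq, ?_⟩
        rw [hqeq, show (2 + 1 : ℕ) = 1 + 2 from rfl, lucasU_step,
          show (1 + 1 : ℕ) = 0 + 2 from rfl, lucasU_step]
        simp [lucasU]; ring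
      · -- descend
        have hq'lt : q' < p := by nlinarith
        set p₂ : ℕ := q'.toNat with hp₂def
        have hp₂ : (p₂ : ℤ) = q' := Int.toNat_of_nonneg hpos
        have hp₂lt : p₂ < p := by exact_mod_cast hp₂ ▸ hq'lt
        have hplt' : p < q := by exact_mod_cast hplt
        obtain ⟨k, hk1, hkp, hkq⟩ := IH p hplt' p₂ (le_of_lt hp₂lt) (by
          rw [hp₂]; linarith [hE'])
        refine ⟨k + 2, by omega, ?_, ?_⟩
        · simpa using hkq
        · -- q = lucasU W 1 (k+3)
          obtain ⟨j, rfl⟩ := Nat.exists_eq_add_of_le hk1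
          have hj : (1 + j) + 2 + 1 = j + 4 := by omega
          rw [hj, lucasU_jump]
          have hkp' : (p₂ : ℤ) = lucasU W 1 j := by rw [hkp]; congr 1; omega
          have hkq' : (p : ℤ) = lucasU W 1 (j + 2) := by rw [hkq]; congr 1; omega
          rw [← hkq', ← hkp', hp₂, hq'def]; ring

/-- sign relation: with `s^2 = 1`, `lucasU (s*W) 1 k = s^(k+1) * lucasU W 1 k`. -/
lemma lucasU_sign (W s : ℤ) (hs : s ^ 2 = 1) :
    ∀ k : ℕ, lucasU (s * W) 1 k = s ^ (k + 1) * lucasU W 1 k ∧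
      lucasU (s * W) 1 (k + 1) = s ^ (k + 2) * lucasU W 1 (k + 1) := by
  intro k
  induction k with
  | zero => exact ⟨by simp [lucasU], by simpa [lucasU] using hs.symm⟩
  | succ k ih =>
    obtain ⟨h0, h1⟩ := ih
    refine ⟨h1, ?_⟩
    rw [lucasU_step, lucasU_step, h0, h1]
    linear_combination (s ^ (k + 1) * lucasU W 1 k) * hs

lemma sq_cases (P : ℤ) : P ^ 2 = 0 ∨ P ^ 2 = 1 ∨ 4 ≤ P ^ 2 := by
  rcases le_or_gt 2 |P| with h | h
  · right; right; nlinarith [sq_abs P]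
  · have h0 : 0 ≤ |P| := abs_nonneg P
    interval_cases h' : |P| <;> [left; right] <;> first
      | (nlinarith [sq_abs P]) | (left; nlinarith [sq_abs P])

/-- main semiprime step -/
lemma semiprime_step (P : ℤ) (p q : ℕ) (hp : p.Prime) (hq : q.Prime) (hpq : p ≤ q)
    (hE : ((p : ℤ) + q) ^ 2 = P ^ 2 * (p * q + 1)) :
    ∃ k : ℕ, 1 ≤ k ∧
      ((p * q : ℕ) : ℤ) = lucasU P 1 (k - 1) * lucasU P 1 (k + 1) ∧
      Prime (lucasU P 1 (k - 1)) ∧ Prime (lucasU P 1 (k + 1)) := by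
  have hp2 : (2 : ℤ) ≤ p := by exact_mod_cast hp.two_le
  have hq2 : (2 : ℤ) ≤ q := by exact_mod_cast hq.two_le
  have hP4 : (4 : ℤ) ≤ P ^ 2 := by
    rcases sq_cases P with h | h | h
    · exfalso; rw [h] at hE; nlinarith
    · exfalso; rw [h] at hE; nlinarith
    · exact h
  set W : ℤ := |P| with hWdef
  have hW2 : W ^ 2 = P ^ 2 := sq_abs P
  have hW : 2 ≤ W := by nlinarith [abs_nonneg P]
  obtain ⟨k, hk1, hkp, hkq⟩ := descent_s2 W hW q p hpq (by rw [hW2]; exact hE)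
  set s : ℤ := if 0 ≤ P then 1 else -1 with hsdef
  have hs : s ^ 2 = 1 := by rw [hsdef]; split <;> norm_num
  have hsabs : s.natAbs = 1 := by rw [hsdef]; split <;> rfl
  have hPsW : P = s * W := by
    rw [hsdef, hWdef]; split
    · rw [abs_of_nonneg ‹_›]; ring
    · rw [abs_of_neg (by linarith [not_le.mp ‹_›])]; ring
  obtain ⟨j, rfl⟩ := Nat.exists_eq_add_of_le hk1
  have e1 : lucasU P 1 ((1 + j) - 1) = s ^ (j + 1) * lucasU W 1 j := by
    rw [show (1 + j) - 1 = j from by omega, hPsW]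
    exact (lucasU_sign W s hs j).1
  have e2 : lucasU P 1 ((1 + j) + 1) = s ^ (j + 3) * lucasU W 1 (j + 2) := by
    rw [show (1 + j) + 1 = (j + 1) + 1 from by omega, hPsW]
    simpa [show j + 1 + 2 = j + 3 from rfl] using (lucasU_sign W s hs (j + 1)).2
  have hkp' : (p : ℤ) = lucasU W 1 j := by rw [hkp]; congr 1; omega
  have hkq' : (q : ℤ) = lucasU W 1 (j + 2) := by rw [hkq]; congr 1; omega
  refine ⟨1 + j, by omega, ?_, ?_, ?_⟩
  · rw [e1, e2, ← hkp', ← hkq']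
    push_cast
    have : s ^ (j + 1) * s ^ (j + 3) = (s ^ 2) ^ (j + 2) := by ring
    rw [show s ^ (j + 1) * (p : ℤ) * (s ^ (j + 3) * q)
        = (s ^ 2) ^ (j + 2) * (p * q) from by ring, hs, one_pow, one_mul]
  · rw [Int.prime_iff_natAbs_prime, e1, ← hkp', Int.natAbs_mul, Int.natAbs_pow,
      hsabs, one_pow, one_mul, Int.natAbs_natCast]
    exact hp
  · rw [Int.prime_iff_natAbs_prime, e2, ← hkq', Int.natAbs_mul, Int.natAbs_pow,
      hsabs, one_pow, one_mul, Int.natAbs_natCast]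
    exact hq

set_option maxHeartbeats 1000000 in
theorem stmt_2 (P : ℤ) (A B : ℤ) (hA : A = P ^ 2 - 2) (hB : B = P ^ 2 + 1)
    (n : ℕ) (hn : 0 < n) (hbig : (n : ℤ) > (|A| + |B|) ^ 3)
    (heq : ((ArithmeticFunction.sigma 2) n : ℤ) - (n : ℤ) ^ 2 = A * n + B) :
    ∃ k : ℕ, 1 ≤ k ∧
      (n : ℤ) = lucasU P 1 (k - 1) * lucasU P 1 (k + 1) ∧
      Prime (lucasU P 1 (k - 1)) ∧ Prime (lucasU P 1 (k + 1)) := by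
  subst hA hB
  have key : ((ArithmeticFunction.sigma 2) n : ℤ)
      = ((n : ℤ) - 1) ^ 2 + P ^ 2 * ((n : ℤ) + 1) := by linear_combination heq
  have hS3 : (3 : ℤ) ≤ |P ^ 2 - 2| + |P ^ 2 + 1| := by
    have h1 : -(P ^ 2 - 2) ≤ |P ^ 2 - 2| := neg_le_abs _
    have h2 : P ^ 2 + 1 ≤ |P ^ 2 + 1| := le_abs_self _
    linarith
  have hn28 : (28 : ℤ) ≤ (n : ℤ) := by
    have h27 := pow_le_pow_left₀ (by norm_num : (0:ℤ) ≤ 3) hS3 3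
    norm_num at h27; linarith
  have hn28' : 28 ≤ n := by exact_mod_cast hn28
  by_cases hnp : n.Prime
  · -- n prime : contradiction
    exfalso
    have hσ : (ArithmeticFunction.sigma 2) n = 1 + n ^ 2 := by
      rw [ArithmeticFunction.sigma_apply, hnp.divisors,
        Finset.sum_insert (by simp; omega), Finset.sum_singleton, one_pow]
    rw [hσ] at key
    have h2n : 2 * (n : ℤ) = P ^ 2 * ((n : ℤ) + 1) := by
      push_cast at key; linear_combination key
    rcases sq_cases P with h | h | h
    · rw [h] at h2n; nlinarith
    · rw [h] at h2n; nlinarith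
    · nlinarith
  · -- n composite
    have hn1 : n ≠ 1 := by omega
    set p : ℕ := n.minFac with hpdef
    have hp : p.Prime := Nat.minFac_prime hn1
    have hpd : p ∣ n := Nat.minFac_dvd n
    set q : ℕ := n / p with hqdef
    have hnpq : n = p * q := (Nat.mul_div_cancel' hpd).symm
    have hp2 : 2 ≤ p := hp.two_le
    have hq2 : 2 ≤ q := by
      rcases Nat.lt_or_ge q 2 with h | h
      · interval_cases q
        · omega
        · exfalso; exact hnp (by rw [hnpq, mul_one]; exact hp)
      · exact h
    have hqn : q < n := by
      calc q < 2 * q := by omega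
        _ ≤ p * q := by exact Nat.mul_le_mul_right q hp2
        _ = n := hnpq.symm
    have hq_dvd : q ∣ n := ⟨p, by rw [hnpq]; ring⟩
    have hmin : ∀ m : ℕ, 2 ≤ m → m ∣ n → p ≤ m :=
      fun m hm hd => Nat.minFac_le_of_dvd hm hd
    clear hpdef hqdef heq
    clear_value p q
    by_cases hqp : q.Prime
    · -- n = p * q semiprime
      by_cases hpe : p = q
      · -- n = p ^ 2 : contradiction
        exfalso
        have hn_eq : n = p ^ 2 := by rw [hnpq, ← hpe]; ring
        have hσ : (ArithmeticFunction.sigma 2) n = 1 + p ^ 2 + p ^ 4 := by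
          rw [ArithmeticFunction.sigma_apply, hn_eq, Nat.sum_divisors_prime_pow hp,
            Finset.sum_range_succ, Finset.sum_range_succ, Finset.sum_range_succ,
            Finset.sum_range_zero]
          ring
        rw [hσ, hn_eq] at key
        push_cast at key
        have hp2' : (2 : ℤ) ≤ p := by exact_mod_cast hp2
        have h3p : 3 * (p : ℤ) ^ 2 = P ^ 2 * ((p : ℤ) ^ 2 + 1) := by
          linear_combination key
        rcases sq_cases P with h | h | h
        · rw [h] at h3p; nlinarith
        · rw [h] at h3p; nlinarith
        · nlinarith
      · -- p < q, genuinely semiprime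
        have hple : p ≤ q := hmin q hqp.two_le hq_dvd
        have hco : Nat.Coprime p q := (Nat.coprime_primes hp hqp).mpr hpe
        have hσp : (ArithmeticFunction.sigma 2) p = 1 + p ^ 2 := by
          rw [ArithmeticFunction.sigma_apply, hp.divisors,
            Finset.sum_insert (by simp; omega), Finset.sum_singleton, one_pow]
        have hσq : (ArithmeticFunction.sigma 2) q = 1 + q ^ 2 := by
          rw [ArithmeticFunction.sigma_apply, hqp.divisors,
            Finset.sum_insert (by simp; omega), Finset.sum_singleton, one_pow]
        have hσ : (ArithmeticFunction.sigma 2) n = (1 + p ^ 2) * (1 + q ^ 2) := by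
          rw [hnpq, (ArithmeticFunction.isMultiplicative_sigma).map_mul_of_coprime hco,
            hσp, hσq]
        rw [hσ, hnpq] at key
        push_cast at key
        have hE : ((p : ℤ) + q) ^ 2 = P ^ 2 * ((p : ℤ) * q + 1) := by
          linear_combination key
        obtain ⟨k, hk1, hprod, hpr1, hpr2⟩ := semiprime_step P p q hp hqp hple hE
        exact ⟨k, hk1, by rw [hnpq]; exact_mod_cast hprod, hpr1, hpr2⟩
    · -- q composite : contradiction with size
      exfalso
      have hq0 : 0 < q := by omega
      have hr2 : q.minFac ^ 2 ≤ q := Nat.minFac_sq_le_self hq0 hqp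
      have hpr : p ≤ q.minFac :=
        hmin q.minFac (q.minFac_prime (by omega)).two_le ((q.minFac_dvd).trans hq_dvd)
      have hpq2 : p ^ 2 ≤ q := le_trans (Nat.pow_le_pow_left hpr 2) hr2
      have hsub : ({1, q, n} : Finset ℕ) ⊆ n.divisors := by
        intro d hd
        simp only [Finset.mem_insert, Finset.mem_singleton] at hd
        rcases hd with rfl | rfl | rfl <;>
          simp [Nat.mem_divisors, hq_dvd] <;> omega
      have hσge : 1 + q ^ 2 + n ^ 2 ≤ (ArithmeticFunction.sigma 2) n := by
        rw [ArithmeticFunction.sigma_apply]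
        calc 1 + q ^ 2 + n ^ 2 = ∑ d ∈ ({1, q, n} : Finset ℕ), d ^ 2 := by
              rw [Finset.sum_insert (by simp; omega),
                Finset.sum_insert (by simp; omega), Finset.sum_singleton, one_pow]
              omega
          _ ≤ _ := Finset.sum_le_sum_of_subset hsub
      have hσge' : (1 : ℤ) + (q : ℤ) ^ 2 + (n : ℤ) ^ 2
          ≤ ((ArithmeticFunction.sigma 2) n : ℤ) := by exact_mod_cast hσge
      rw [key] at hσge'
      -- so q^2 + 2n ≤ P^2 (n+1)
      have hQ : (q : ℤ) ^ 2 + 2 * (n : ℤ) ≤ P ^ 2 * ((n : ℤ) + 1) := by nlinarith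
      have hq2' : (2 : ℤ) ≤ q := by exact_mod_cast hq2
      have hp2' : (2 : ℤ) ≤ p := by exact_mod_cast hp2
      have hneq : (n : ℤ) = (p : ℤ) * q := by exact_mod_cast hnpq
      have hpq2' : (p : ℤ) ^ 2 ≤ q := by exact_mod_cast hpq2
      clear hσge hσge' hsub key hmin
      rcases sq_cases P with h | h | h
      · rw [h, zero_mul] at hQ; linarith [sq_nonneg (q : ℤ)]
      · rw [h, one_mul] at hQ; linarith [sq_nonneg (q : ℤ)]
      · -- 4 ≤ P^2
        have habsA : |P ^ 2 - 2| = P ^ 2 - 2 := abs_of_nonneg (by linarith)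
        have habsB : |P ^ 2 + 1| = P ^ 2 + 1 := abs_of_nonneg (by linarith)
        rw [habsA, habsB] at hbig
        -- n > (2 P^2 - 1)^3
        have hbig' : (2 * P ^ 2 - 1) ^ 3 < (n : ℤ) := by
          calc (2 * P ^ 2 - 1) ^ 3 = (P ^ 2 - 2 + (P ^ 2 + 1)) ^ 3 := by ring
            _ < (n : ℤ) := hbig
        have e1 : (7 : ℤ) ≤ 2 * P ^ 2 - 1 := by linarith
        have e2 : 7 * (2 * P ^ 2 - 1) ≤ (2 * P ^ 2 - 1) ^ 2 := by nlinarith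
        have e3 : 49 * (2 * P ^ 2 - 1) ≤ (2 * P ^ 2 - 1) ^ 3 := by nlinarith
        have hPle : P ^ 2 ≤ 2 * (n : ℤ) := by linarith
        have hq2le : (q : ℤ) ^ 2 ≤ P ^ 2 * n := by nlinarith
        have hnle : (n : ℤ) ≤ P ^ 2 * (p : ℤ) ^ 2 := by
          have h1 : (n : ℤ) * n ≤ (P ^ 2 * (p : ℤ) ^ 2) * n := by nlinarith
          exact le_of_mul_le_mul_right h1 (by linarith)
        have hp3 : (p : ℤ) ^ 3 ≤ n := by nlinarith
        have hcube : (n : ℤ) ^ 3 ≤ (P ^ 2) ^ 3 * ((p : ℤ) ^ 3) ^ 2 := by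
          calc (n : ℤ) ^ 3 ≤ (P ^ 2 * (p : ℤ) ^ 2) ^ 3 :=
                pow_le_pow_left₀ (by positivity) hnle 3
            _ = (P ^ 2) ^ 3 * ((p : ℤ) ^ 3) ^ 2 := by ring
        have hfin : (n : ℤ) ^ 3 ≤ (P ^ 2) ^ 3 * (n : ℤ) ^ 2 := by
          have := pow_le_pow_left₀ (by positivity : (0:ℤ) ≤ (p : ℤ) ^ 3) hp3 2
          nlinarith [pow_nonneg (sq_nonneg P) 3]
        have hnP6 : (n : ℤ) ≤ (P ^ 2) ^ 3 := by
          have h2 : (n : ℤ) * ((n:ℤ) * n) ≤ (P ^ 2) ^ 3 * ((n:ℤ) * n) := by nlinarith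
          exact le_of_mul_le_mul_right h2 (by nlinarith)
        nlinarith
end

section
/- Let P be an integer and m a positive integer. For every positive integer n with n > (|V_{2m}(P,−1)| + |U_{2m}(P,−1)² − 1|)³, if σ₂(n) − n² = V_{2m}(P,−1)·n − U_{2m}(P,−1)² + 1 (as integers), then either there exists an integer k ≥ 0 such that n = U_{2k+1}(P,−1) · U_{2k+2m+1}(P,−1) with both U_{2k+1}(P,−1) and U_{2k+2m+1}(P,−1) prime, or there exists an integer k with 0 ≤ k < m and m ≠ 2k+1 such that n = U_{2k+1}(P,−1) · U_{2m−2k−1}(P,−1) with both U_{2k+1}(P,−1) and U_{2m−2k−1}(P,−1) prime. -/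
/-- Lucas sequence of the second kind: `V 0 = 2`, `V 1 = P`,
`V (n+2) = P * V (n+1) - Q * V n`. -/
def lucasV (P Q : ℤ) : ℕ → ℤ
  | 0 => 2
  | 1 => P
  | n + 2 => P * lucasV P Q (n + 1) - Q * lucasV P Q n

namespace SP

def uu (P : ℤ) : ℕ → ℤ := lucasU P (-1)
def vv (P : ℤ) : ℕ → ℤ := lucasV P (-1)

variable {P : ℤ}

@[simp] lemma uu0 : uu P 0 = 0 := rfl
@[simp] lemma uu1 : uu P 1 = 1 := rfl
@[simp] lemma vv0 : vv P 0 = 2 := rfl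
@[simp] lemma vv1 : vv P 1 = P := rfl

lemma uu_rec (n : ℕ) : uu P (n+2) = P * uu P (n+1) + uu P n := by
  show lucasU P (-1) (n+2) = _; rw [lucasU]; show _ = P * uu P (n+1) + uu P n; ring_nf
  rfl

lemma vv_rec (n : ℕ) : vv P (n+2) = P * vv P (n+1) + vv P n := by
  show lucasV P (-1) (n+2) = _; rw [lucasV]; show _ = P * vv P (n+1) + vv P n; ring_nf
  rfl


lemma h12 : ∀ n, (2 * uu P (n+1) = P * uu P n + vv P n) ∧
    (2 * vv P (n+1) = P * vv P n + (P^2+4) * uu P n) := by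
  intro n
  induction n with
  | zero => constructor <;> simp <;> ring
  | succ k ih =>
    obtain ⟨i1, i2⟩ := ih
    constructor
    · have e : (2:ℤ) * (2 * uu P (k+2)) = 2 * (P * uu P (k+1) + vv P (k+1)) := by
        rw [uu_rec k]
        linear_combination P * i1 - i2
      exact mul_left_cancel₀ two_ne_zero e
    · have e : (2:ℤ) * (2 * vv P (k+2)) = 2 * (P * vv P (k+1) + (P^2+4) * uu P (k+1)) := by
        rw [vv_rec k]
        linear_combination P * i2 - (P^2+4) * i1
      exact mul_left_cancel₀ two_ne_zero e

lemma h1 (n : ℕ) : 2 * uu P (n+1) = P * uu P n + vv P n := (h12 n).1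
lemma h2 (n : ℕ) : 2 * vv P (n+1) = P * vv P n + (P^2+4) * uu P n := (h12 n).2

/-- Pell norm: V_n² − (P²+4) U_n² = 4(−1)ⁿ -/
lemma normE : ∀ n, (vv P n)^2 - (P^2+4) * (uu P n)^2 = 4 * (-1:ℤ)^n := by
  intro n
  induction n with
  | zero => simp
  | succ k ih =>
    have a1 := h1 (P := P) k
    have a2 := h2 (P := P) k
    have h4 : (4:ℤ) * ((vv P (k+1))^2 - (P^2+4) * (uu P (k+1))^2) = 4 * (4 * (-1:ℤ)^(k+1)) := by
      rw [pow_succ]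
      linear_combination (2*vv P (k+1) + P*vv P k + (P^2+4)*uu P k) * a2
        - (P^2+4) * (2*uu P (k+1) + P*uu P k + vv P k) * a1 + (-4) * ih
    linarith

/-- Casoratian: V_n U_{n+1} − U_n V_{n+1} = 2(−1)ⁿ -/
lemma wron : ∀ n, vv P n * uu P (n+1) - uu P n * vv P (n+1) = 2 * (-1:ℤ)^n := by
  intro n
  induction n with
  | zero => simp
  | succ k ih =>
    rw [uu_rec k, vv_rec k, pow_succ]
    linear_combination (-1) * ih

/-- addition: V_a U_b + U_a V_b = 2 U_{a+b} -/
lemma addD1 (a : ℕ) : ∀ b, vv P a * uu P b + uu P a * vv P b = 2 * uu P (a+b) := by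
  have key : ∀ b, (vv P a * uu P b + uu P a * vv P b = 2 * uu P (a+b)) ∧
      (vv P a * uu P (b+1) + uu P a * vv P (b+1) = 2 * uu P (a+b+1)) := by
    intro b
    induction b with
    | zero =>
      refine ⟨by simp [mul_comm], ?_⟩
      have := h1 (P := P) a
      norm_num
      linarith
    | succ k ih =>
      refine ⟨ih.2, ?_⟩
      have e1 : a + (k+1) + 1 = (a+k) + 2 := by omega
      have e2 : a + (k+1) = (a+k) + 1 := by omega
      rw [uu_rec k, vv_rec k, e1, uu_rec (a+k)]
      linear_combination P * ih.2 + ih.1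
  exact fun b => (key b).1

/-- subtraction: V_a U_{a+c} − U_a V_{a+c} = 2(−1)^a U_c -/
lemma addD2 (a : ℕ) : ∀ c, vv P a * uu P (a+c) - uu P a * vv P (a+c) = 2 * (-1:ℤ)^a * uu P c := by
  have key : ∀ c, (vv P a * uu P (a+c) - uu P a * vv P (a+c) = 2 * (-1:ℤ)^a * uu P c) ∧
      (vv P a * uu P (a+c+1) - uu P a * vv P (a+c+1) = 2 * (-1:ℤ)^a * uu P (c+1)) := by
    intro c
    induction c with
    | zero =>
      refine ⟨by simp; ring, ?_⟩
      simpa using wron (P := P) a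
    | succ k ih =>
      refine ⟨ih.2, ?_⟩
      have e1 : a + (k+1) + 1 = (a+k) + 2 := by omega
      have e2 : a + (k+1) = (a+k) + 1 := by omega
      rw [e1, uu_rec (a+k), vv_rec (a+k), uu_rec k]
      linear_combination P * ih.2 + ih.1
  exact fun c => (key c).1

/-- double-step: 2 U_{n+2} = (P²+2) U_n + P V_n -/
lemma dbU (n : ℕ) : 2 * uu P (n+2) = (P^2+2) * uu P n + P * vv P n := by
  have e : (2:ℤ) * (2 * uu P (n+2)) = 2 * ((P^2+2) * uu P n + P * vv P n) := by
    linear_combination 2 * h1 (P := P) (n+1) + P * h1 (P := P) n + h2 (P := P) n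
  exact mul_left_cancel₀ two_ne_zero e

/-- double-step: 2 V_{n+2} = (P²+2) V_n + P(P²+4) U_n -/
lemma dbV (n : ℕ) : 2 * vv P (n+2) = (P^2+2) * vv P n + P * (P^2+4) * uu P n := by
  have e : (2:ℤ) * (2 * vv P (n+2)) = 2 * ((P^2+2) * vv P n + P * (P^2+4) * uu P n) := by
    linear_combination 2 * h2 (P := P) (n+1) + P * h2 (P := P) n + (P^2+4) * h1 (P := P) n
  exact mul_left_cancel₀ two_ne_zero e

lemma uu_pos (hP : 1 ≤ P) : ∀ n, 1 ≤ uu P (n+1) := by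
  have key : ∀ n, 0 ≤ uu P n ∧ 1 ≤ uu P (n+1) := by
    intro n
    induction n with
    | zero => simp
    | succ k ih =>
      refine ⟨by linarith [ih.2], ?_⟩
      rw [uu_rec k]
      nlinarith [ih.1, ih.2]
  exact fun n => (key n).2

lemma vv_pos (hP : 1 ≤ P) : ∀ n, 1 ≤ vv P n := by
  have key : ∀ n, 1 ≤ vv P n ∧ 1 ≤ vv P (n+1) := by
    intro n
    induction n with
    | zero => exact ⟨by norm_num, by simpa using hP⟩
    | succ k ih =>
      refine ⟨ih.2, ?_⟩
      rw [vv_rec k]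
      nlinarith [ih.1, ih.2]
  exact fun n => (key n).1

lemma vv_even_ge (hP : 0 ≤ P) : ∀ n, 2 ≤ vv P (2*n) := by
  have key : ∀ n, 2 ≤ vv P (2*n) ∧ 0 ≤ vv P (2*n+1) := by
    intro n
    induction n with
    | zero => simp [hP]
    | succ k ih =>
      have hA : 2 ≤ vv P (2*k+2) := by
        rw [vv_rec (2*k)]; nlinarith [ih.1, ih.2]
      have hB : 0 ≤ vv P (2*k+3) := by
        rw [show 2*k+3 = (2*k+1)+2 from by omega, vv_rec,
          show 2*k+1+1 = 2*k+2 from by omega]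
        nlinarith [ih.2, hA]
      exact ⟨by rw [show 2*(k+1) = 2*k+2 from by omega]; exact hA,
        by rw [show 2*(k+1)+1 = 2*k+3 from by omega]; exact hB⟩
  exact fun n => (key n).1

lemma uu_neg : ∀ n, uu (-P) n = (-1:ℤ)^(n+1) * uu P n := by
  have key : ∀ n, (uu (-P) n = (-1:ℤ)^(n+1) * uu P n) ∧
      (uu (-P) (n+1) = (-1:ℤ)^(n+2) * uu P (n+1)) := by
    intro n
    induction n with
    | zero => norm_num
    | succ k ih =>
      refine ⟨ih.2, ?_⟩
      rw [uu_rec (P := -P) k, uu_rec (P := P) k, ih.1, ih.2, pow_succ, pow_succ, pow_succ]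
      ring
  exact fun n => (key n).1

lemma vv_neg : ∀ n, vv (-P) n = (-1:ℤ)^n * vv P n := by
  have key : ∀ n, (vv (-P) n = (-1:ℤ)^n * vv P n) ∧
      (vv (-P) (n+1) = (-1:ℤ)^(n+1) * vv P (n+1)) := by
    intro n
    induction n with
    | zero => norm_num
    | succ k ih =>
      refine ⟨ih.2, ?_⟩
      rw [vv_rec (P := -P) k, vv_rec (P := P) k, ih.1, ih.2, pow_succ, pow_succ]
      ring
  exact fun n => (key n).1

lemma uu_zero_even : ∀ n, uu 0 (2*n) = 0 ∧ uu 0 (2*n+1) = 1 := by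
  intro n
  induction n with
  | zero => simp
  | succ k ih =>
    have hA : uu 0 (2*k+2) = 0 := by
      rw [uu_rec (2*k)]; simp [ih.1]
    have hB : uu 0 (2*k+3) = 1 := by
      rw [show 2*k+3 = (2*k+1)+2 from by omega, uu_rec]; simp [ih.2]
    exact ⟨by rw [show 2*(k+1) = 2*k+2 from by omega]; exact hA,
      by rw [show 2*(k+1)+1 = 2*k+3 from by omega]; exact hB⟩

lemma vv_zero_even : ∀ n, vv 0 (2*n) = 2 := by
  have key : ∀ n, vv 0 (2*n) = 2 := by
    intro n
    induction n with
    | zero => simp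
    | succ k ih =>
      have e1 : 2*(k+1) = 2*k + 2 := by omega
      rw [e1, vv_rec (2*k)]
      simpa using ih
  exact key

/-- Classification of solutions of s² + 4 = (P²+4)x²: they are (V_j, U_j) for odd j. -/
lemma pell (hP : 1 ≤ P) : ∀ N : ℕ, ∀ x s : ℤ, x.toNat ≤ N → 1 ≤ x → 0 ≤ s →
    s^2 + 4 = (P^2+4) * x^2 → ∃ r : ℕ, x = uu P (2*r+1) ∧ s = vv P (2*r+1) := by
  intro N
  induction N with
  | zero => intro x s hxN hx _ _; exfalso; omega
  | succ N ih =>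
    intro x s hxN hx hs hyp
    rcases eq_or_lt_of_le hx with h1 | h2
    · -- base case x = 1
      have hx1 : x = 1 := h1.symm
      subst hx1
      have h0 : (s - P) * (s + P) = 0 := by linear_combination hyp
      rcases mul_eq_zero.mp h0 with h | h
      · exact ⟨0, by simp, by simp only [vv1, show 2*0+1 = 1 from rfl]; linarith⟩
      · exfalso; linarith
    · -- descent, x ≥ 2
      have hprod : (s - P*x) * (s + P*x) = 4*(x^2 - 1) := by linear_combination hyp
      have heven : 2 ∣ (s - P*x) := by
        have h2e : Even ((s - P*x) * (s + P*x)) := by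
          rw [hprod]; exact ⟨2*(x^2-1), by ring⟩
        rcases Int.even_mul.mp h2e with h | h
        · exact h.two_dvd
        · have : Even (s - P*x) := by
            have e : (s - P*x) = (s + P*x) - 2*(P*x) := by ring
            rw [e]; exact h.sub (even_two_mul _)
          exact this.two_dvd
      obtain ⟨w, hw⟩ := heven
      set x' : ℤ := x - P*w with hx'def
      set s₁ : ℤ := P^2*w + s - 2*P*x with hs₁def
      have e2x : 2*x' = (P^2+2)*x - P*s := by rw [hx'def]; linear_combination P*hw
      have e2s : 2*s₁ = (P^2+2)*s - P*(P^2+4)*x := by rw [hs₁def]; linear_combination (-P^2)*hw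
      have keyq : s₁^2 + 4 = (P^2+4) * x'^2 := by
        have h4 : 4*(s₁^2 + 4) = 4*((P^2+4) * x'^2) := by
          linear_combination (2*s₁ + (P^2+2)*s - P*(P^2+4)*x) * e2s
            - (P^2+4) * (2*x' + (P^2+2)*x - P*s) * e2x + 4*hyp
        linarith
      have hgt : 0 < s - P*x := by
        by_contra hc
        push_neg at hc
        have hsum : 0 < s + P*x := by nlinarith
        nlinarith [hprod]
      have hx'pos : 1 ≤ x' := by
        by_contra hc
        push_neg at hc
        have hPs : (P^2+2)*x ≤ P*s := by linarith
        have hsq : ((P^2+2)*x) * ((P^2+2)*x) ≤ (P*s) * (P*s) :=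
          mul_le_mul hPs hPs (by positivity) (by nlinarith)
        nlinarith [hsq, hyp]
      have hx'lt : x' < x := by
        have : P^2*x < P*s := by nlinarith
        linarith
      have hN : x'.toNat ≤ N := by omega
      obtain ⟨r', hx'U, hsV⟩ := ih x' |s₁| hN hx'pos (abs_nonneg _) (by rw [sq_abs]; exact keyq)
      have hxe : 2*x = (P^2+2)*x' + P*s₁ := by
        have h4 : 2*(2*x) = 2*((P^2+2)*x' + P*s₁) := by
          linear_combination -(P^2+2)*e2x - P*e2s
        linarith
      have hse : 2*s = (P^2+2)*s₁ + P*(P^2+4)*x' := by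
        have h4 : 2*(2*s) = 2*((P^2+2)*s₁ + P*(P^2+4)*x') := by
          linear_combination -(P^2+2)*e2s - P*(P^2+4)*e2x
        linarith
      rcases (abs_eq (by linarith [vv_pos hP (2*r'+1)])).mp hsV with hpos | hneg
      · -- s₁ = V_{2r'+1} : climb up
        refine ⟨r'+1, ?_, ?_⟩
        · have hd := dbU (P := P) (2*r'+1)
          rw [show 2*(r'+1)+1 = (2*r'+1)+2 from by omega]
          rw [hx'U, hpos] at hxe
          linarith
        · have hd := dbV (P := P) (2*r'+1)
          rw [show 2*(r'+1)+1 = (2*r'+1)+2 from by omega]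
          rw [hx'U, hpos] at hse
          linarith
      · -- s₁ = −V_{2r'+1}
        exfalso
        rw [hx'U, hneg] at hxe hse
        obtain _ | r'' := r'
        · -- r' = 0 : x = 1, contradiction
          rw [show (2*0+1 : ℕ) = 1 from rfl, uu1, vv1] at hxe
          nlinarith [hxe]
        · have hu := dbU (P := P) (2*r''+1)
          have hv := dbV (P := P) (2*r''+1)
          rw [show 2*(r''+1)+1 = (2*r''+1)+2 from by omega] at hxe hse
          -- 4s = -(P²+2)·2V_{2r''+3} + P(P²+4)·2U_{2r''+3} = -4 V_{2r''+1}
          have hs4 : 4*s = -4 * vv P (2*r''+1) := by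
            linear_combination 2*hse - (P^2+2)*hv + P*(P^2+4)*hu
          have := vv_pos hP (2*r''+1)
          linarith

lemma classify (hP : 1 ≤ P) (m : ℕ) (hm : 1 ≤ m) (p q : ℤ) (hp : 1 ≤ p) (hq : 1 ≤ q)
    (hpq : p^2 + q^2 + (uu P (2*m))^2 = vv P (2*m) * p * q) :
    (∃ k, p = uu P (2*k+1) ∧ q = uu P (2*k+2*m+1)) ∨
    (∃ k, q = uu P (2*k+1) ∧ p = uu P (2*k+2*m+1)) ∨
    (∃ k, k < m ∧ p = uu P (2*k+1) ∧ q = uu P (2*m - (2*k+1))) := by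
  have hU1 : 1 ≤ uu P (2*m) := by
    rw [show 2*m = (2*m-1)+1 from by omega]; exact uu_pos hP _
  have hE : (vv P (2*m))^2 - (P^2+4) * (uu P (2*m))^2 = 4 := by
    have h := normE (P := P) (2*m)
    rw [pow_mul] at h; norm_num at h; exact h
  have hkey : (2*q - vv P (2*m)*p)^2 = (uu P (2*m))^2 * ((P^2+4)*p^2 - 4) := by
    linear_combination 4*hpq + p^2*hE
  have hdvd : uu P (2*m) ∣ (2*q - vv P (2*m)*p) := by
    have h2 : (uu P (2*m))^2 ∣ (2*q - vv P (2*m)*p)^2 := ⟨_, hkey⟩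
    exact (Int.pow_dvd_pow_iff two_ne_zero).mp h2
  obtain ⟨s₀, hs₀⟩ := hdvd
  have hUne : (uu P (2*m))^2 ≠ 0 := pow_ne_zero 2 (by linarith)
  have hs₀sq : s₀^2 + 4 = (P^2+4)*p^2 := by
    have hcan : (uu P (2*m))^2 * (s₀^2 + 4) = (uu P (2*m))^2 * ((P^2+4)*p^2) := by
      linear_combination hkey - (2*q - vv P (2*m)*p + uu P (2*m)*s₀) * hs₀
    exact mul_left_cancel₀ hUne hcan
  obtain ⟨r, hpU, hrV⟩ := pell hP p.toNat p |s₀| le_rfl hp (abs_nonneg _)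
    (by rw [sq_abs]; exact hs₀sq)
  have hVpos := vv_pos hP (2*r+1)
  have hsq0 : 2*q = vv P (2*m)*p + uu P (2*m) * s₀ := by linarith [hs₀]
  rcases (abs_eq (by linarith)).mp hrV with hsgn | hsgn
  · -- s₀ = V_{2r+1} : q = U_{2m+2r+1}
    left
    refine ⟨r, hpU, ?_⟩
    have hD1 := addD1 (P := P) (2*m) (2*r+1)
    have h2q : 2*q = 2 * uu P (2*m + (2*r+1)) := by
      rw [hpU, hsgn] at hsq0
      linarith [hD1]
    rw [show 2*r+2*m+1 = 2*m+(2*r+1) from by omega]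
    linarith
  · -- s₀ = −V_{2r+1}
    have hsq1 : 2*q = vv P (2*m) * uu P (2*r+1) - uu P (2*m) * vv P (2*r+1) := by
      rw [hsgn] at hsq0; rw [← hpU]; linarith
    rcases le_or_gt m r with hmr | hrm
    · -- r ≥ m : second branch (roles swapped), k = r − m
      right; left
      refine ⟨r - m, ?_, ?_⟩
      · have hD2 := addD2 (P := P) (2*m) (2*(r-m)+1)
        have e : 2*m + (2*(r-m)+1) = 2*r+1 := by omega
        rw [e, pow_mul] at hD2
        norm_num at hD2
        linarith
      · rw [show 2*(r-m)+2*m+1 = 2*r+1 from by omega]; exact hpU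
    · -- r < m : third branch
      right; right
      refine ⟨r, hrm, hpU, ?_⟩
      have hD2 := addD2 (P := P) (2*r+1) (2*m - (2*r+1))
      have e : (2*r+1) + (2*m - (2*r+1)) = 2*m := by omega
      rw [e] at hD2
      have hsign : ((-1:ℤ))^(2*r+1) = -1 := by
        rw [pow_succ, pow_mul]; norm_num
      rw [hsign] at hD2
      linarith

lemma sigma2_prime {p : ℕ} (hp : p.Prime) : (ArithmeticFunction.sigma 2) p = p^2 + 1 := by
  rw [ArithmeticFunction.sigma_apply, hp.divisors, Finset.sum_pair hp.one_lt.ne]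
  ring

lemma sigma2_mul {p q : ℕ} (hp : p.Prime) (hq : q.Prime) (hne : p ≠ q) :
    (ArithmeticFunction.sigma 2) (p*q) = (p^2+1)*(q^2+1) := by
  rw [ArithmeticFunction.isMultiplicative_sigma.map_mul_of_coprime
    ((Nat.coprime_primes hp hq).mpr hne), sigma2_prime hp, sigma2_prime hq]

lemma sigma2_sq {p : ℕ} (hp : p.Prime) :
    (ArithmeticFunction.sigma 2) (p^2) = p^4 + p^2 + 1 := by
  rw [ArithmeticFunction.sigma_apply, Nat.divisors_prime_pow hp, Finset.sum_map]
  simp [Finset.sum_range_succ]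
  ring

lemma sigma2_lb {n d : ℕ} (hd : d ∣ n) (h1 : 1 < d) (h2 : d < n) :
    1 + d^2 + n^2 ≤ (ArithmeticFunction.sigma 2) n := by
  have hn0 : n ≠ 0 := by omega
  have hsub : ({1, d, n} : Finset ℕ) ⊆ n.divisors := by
    intro x hx
    simp only [Finset.mem_insert, Finset.mem_singleton] at hx
    rcases hx with rfl | rfl | rfl
    · exact Nat.one_mem_divisors.mpr hn0
    · exact Nat.mem_divisors.mpr ⟨hd, hn0⟩
    · exact Nat.mem_divisors.mpr ⟨dvd_rfl, hn0⟩
  rw [ArithmeticFunction.sigma_apply]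
  have hm1 : (1:ℕ) ∉ ({d, n} : Finset ℕ) := by
    simp only [Finset.mem_insert, Finset.mem_singleton]; push_neg; omega
  have hm2 : d ∉ ({n} : Finset ℕ) := by simp only [Finset.mem_singleton]; omega
  calc 1 + d^2 + n^2 = ∑ x ∈ ({1, d, n} : Finset ℕ), x^2 := by
        rw [Finset.sum_insert hm1, Finset.sum_insert hm2, Finset.sum_singleton]
        ring
    _ ≤ ∑ x ∈ n.divisors, x^2 := Finset.sum_le_sum_of_subset hsub

set_option maxHeartbeats 1000000 in
lemma main (P : ℤ) (hP0 : 0 ≤ P) (m : ℕ) (hm : 1 ≤ m) (n : ℕ) (hn : 0 < n)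
    (hbig : (n : ℤ) > (|vv P (2 * m)| + |uu P (2 * m) ^ 2 - 1|) ^ 3)
    (heq : ((ArithmeticFunction.sigma 2) n : ℤ) - (n : ℤ) ^ 2 =
      vv P (2 * m) * n - uu P (2 * m) ^ 2 + 1) :
    (∃ k : ℕ,
      (n : ℤ) = uu P (2 * k + 1) * uu P (2 * k + 2 * m + 1) ∧
      Prime (uu P (2 * k + 1)) ∧ Prime (uu P (2 * k + 2 * m + 1))) ∨
    (∃ k : ℕ, k < m ∧ m ≠ 2 * k + 1 ∧
      (n : ℤ) = uu P (2 * k + 1) * uu P (2 * m - (2 * k + 1)) ∧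
      Prime (uu P (2 * k + 1)) ∧ Prime (uu P (2 * m - (2 * k + 1)))) := by
  set a : ℤ := vv P (2*m) with hadef
  set U : ℤ := uu P (2*m) with hUdef
  set B : ℤ := |U^2 - 1| with hBdef
  have ha2 : 2 ≤ a := vv_even_ge hP0 m
  have hB0 : 0 ≤ B := abs_nonneg _
  have hUB : U^2 ≤ B + 1 := by
    have := le_abs_self (U^2 - 1); linarith
  have hbig' : (n:ℤ) > (a + B)^3 := by
    rwa [abs_of_nonneg (by linarith : (0:ℤ) ≤ a)] at hbig
  have hab2 : 2 ≤ a + B := by linarith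
  have hcube : a + B ≤ (a + B)^3 := by
    calc a + B = (a+B)^1 := (pow_one _).symm
      _ ≤ (a+B)^3 := pow_le_pow_right₀ (by linarith) (by norm_num)
  have hn8 : (8:ℤ) < n := by
    have h23 : (2:ℤ)^3 ≤ (a+B)^3 := pow_le_pow_left₀ (by norm_num) hab2 3
    norm_num at h23
    linarith
  have hn2 : 2 ≤ n := by exact_mod_cast (by linarith : (2:ℤ) ≤ (n:ℤ))
  have hnn : (0:ℤ) ≤ (n:ℤ) := by positivity
  by_cases hprime : n.Prime
  · exfalso
    rw [sigma2_prime hprime] at heq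
    push_cast at heq
    have han : a * n = U^2 := by linarith
    have h2n : 2 * (n:ℤ) ≤ a * n := by nlinarith
    nlinarith
  · -- n composite
    have hp : n.minFac.Prime := Nat.minFac_prime (by omega)
    set p : ℕ := n.minFac with hpdef
    obtain ⟨q, hnpq⟩ : p ∣ n := Nat.minFac_dvd n
    clear_value p
    have hq0 : q ≠ 0 := by
      intro h; rw [h, mul_zero] at hnpq; omega
    have hq1 : 1 < q := by
      rcases Nat.lt_or_ge q 2 with h | h
      · exfalso
        have : q = 1 := by omega
        rw [this, mul_one] at hnpq
        exact hprime (hnpq ▸ hp)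
      · omega
    have hqn : q < n := by nlinarith [hp.two_le, hnpq]
    by_cases hqprime : q.Prime
    · by_cases hpq : p = q
      · -- n = p² : impossible
        exfalso
        have hσ : (ArithmeticFunction.sigma 2) n = p^4 + p^2 + 1 := by
          rw [hnpq, ← hpq, ← pow_two]; exact sigma2_sq hp
        rw [hσ] at heq
        push_cast at heq
        have hnp2 : (n:ℤ) = (p:ℤ)^2 := by
          rw [hnpq, ← hpq]; push_cast; ring
        rw [hnp2] at heq hbig'
        have hU2 : U^2 = (a - 1) * (p:ℤ)^2 := by linear_combination heq
        have h1 : (p:ℤ)^2 ≤ U^2 := by nlinarith [hU2, ha2, sq_nonneg (p:ℤ)]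
        have h2 : U^2 + 1 ≤ a + B := by linarith
        linarith [hcube, hbig', h1, h2]
      · -- n = p*q, p < q primes : the real case
        have hqdn : q ∣ n := ⟨p, by rw [hnpq]; ring⟩
        have hplq : p < q := by
          refine lt_of_le_of_ne ?_ hpq
          rw [hpdef]
          exact Nat.minFac_le_of_dvd hqprime.two_le hqdn
        have hσ : (ArithmeticFunction.sigma 2) n = (p^2+1)*(q^2+1) := by
          rw [hnpq]; exact sigma2_mul hp hqprime hpq
        rw [hσ] at heq
        push_cast at heq
        have hcast : (n:ℤ) = (p:ℤ) * (q:ℤ) := by rw [hnpq]; push_cast; ring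
        rw [hcast] at heq
        have hmain : (p:ℤ)^2 + (q:ℤ)^2 + U^2 = a * (p:ℤ) * (q:ℤ) := by
          linear_combination heq
        rcases eq_or_lt_of_le hP0 with hPz | hPpos
        · -- P = 0 : contradiction with p < q
          exfalso
          have hU0 : U = 0 := by rw [hUdef, ← hPz]; exact (uu_zero_even m).1
          have ha0 : a = 2 := by rw [hadef, ← hPz]; exact vv_zero_even m
          rw [hU0, ha0] at hmain
          have hpqz : ((p:ℤ) - q)^2 = 0 := by linear_combination hmain
          have : (p:ℤ) < (q:ℤ) := by exact_mod_cast hplq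
          nlinarith [hpqz]
        · have hP1 : 1 ≤ P := hPpos
          have hp1 : (1:ℤ) ≤ (p:ℤ) := by exact_mod_cast hp.one_lt.le
          have hq1' : (1:ℤ) ≤ (q:ℤ) := by exact_mod_cast hq1.le
          obtain B1 | B2 | B3 := classify hP1 m hm p q hp1 hq1' hmain
          · obtain ⟨k, hk1, hk2⟩ := B1
            exact Or.inl ⟨k, by rw [hcast, hk1, hk2],
              by rw [← hk1]; exact Nat.prime_iff_prime_int.mp hp,
              by rw [← hk2]; exact Nat.prime_iff_prime_int.mp hqprime⟩
          · obtain ⟨k, hk1, hk2⟩ := B2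
            exact Or.inl ⟨k, by rw [hcast, hk1, hk2]; ring,
              by rw [← hk1]; exact Nat.prime_iff_prime_int.mp hqprime,
              by rw [← hk2]; exact Nat.prime_iff_prime_int.mp hp⟩
          · obtain ⟨k, hkm, hk1, hk2⟩ := B3
            refine Or.inr ⟨k, hkm, ?_, by rw [hcast, hk1, hk2],
              by rw [← hk1]; exact Nat.prime_iff_prime_int.mp hp,
              by rw [← hk2]; exact Nat.prime_iff_prime_int.mp hqprime⟩
            intro hcon
            rw [show 2*m - (2*k+1) = 2*k+1 from by omega, ← hk1] at hk2
            have : q = p := by exact_mod_cast hk2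
            omega
    · -- q composite : n has three prime factors, impossible
      exfalso
      have hr : q.minFac.Prime := Nat.minFac_prime (by omega)
      obtain ⟨q', hqq'⟩ : q.minFac ∣ q := Nat.minFac_dvd q
      set r : ℕ := q.minFac with hrdef
      clear_value r
      have hrd : r ∣ q := ⟨q', hqq'⟩
      have hq'1 : q' ≠ 1 := by
        intro h; rw [h, mul_one] at hqq'; exact hqprime (hqq' ▸ hr)
      have hq'0 : q' ≠ 0 := by
        intro h; rw [h, mul_zero] at hqq'; omega
      have hqdn : q ∣ n := ⟨p, by rw [hnpq]; ring⟩
      have hpr : p ≤ r := by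
        rw [hpdef]; exact Nat.minFac_le_of_dvd hr.two_le (hrd.trans hqdn)
      have hq'p : q'.minFac.Prime := Nat.minFac_prime hq'1
      have hq'dn : q' ∣ n := (dvd_of_mul_left_eq r hqq'.symm).trans hqdn
      have hpq' : p ≤ q' := by
        rw [hpdef]
        exact le_trans
          (Nat.minFac_le_of_dvd hq'p.two_le ((Nat.minFac_dvd q').trans hq'dn))
          (Nat.minFac_le (Nat.pos_of_ne_zero hq'0))
      have hqp2 : p^2 ≤ q := by
        calc p^2 = p * p := sq p
          _ ≤ r * q' := Nat.mul_le_mul hpr hpq'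
          _ = q := hqq'.symm
      have hσlb : 1 + q^2 + n^2 ≤ (ArithmeticFunction.sigma 2) n :=
        sigma2_lb hqdn hq1 hqn
      have hσlb' : (1:ℤ) + (q:ℤ)^2 + (n:ℤ)^2 ≤ ((ArithmeticFunction.sigma 2) n : ℤ) := by
        exact_mod_cast hσlb
      have hq2an : (q:ℤ)^2 + U^2 ≤ a * n := by linarith
      have hcast : (n:ℤ) = (p:ℤ) * (q:ℤ) := by rw [hnpq]; push_cast; ring
      have hqpos : (0:ℤ) < (q:ℤ) := by exact_mod_cast Nat.pos_of_ne_zero hq0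
      have hppos : (0:ℤ) < (p:ℤ) := by exact_mod_cast hp.pos
      have hqap : (q:ℤ) ≤ a * p := by
        have h1 : (q:ℤ) * q ≤ (a * p) * q := by
          rw [hcast] at hq2an; nlinarith [sq_nonneg U]
        exact le_of_mul_le_mul_right h1 hqpos
      have hqp2' : (p:ℤ)^2 ≤ (q:ℤ) := by exact_mod_cast hqp2
      have hpa : (p:ℤ) ≤ a := by
        have h1 : (p:ℤ) * p ≤ a * p := by nlinarith
        exact le_of_mul_le_mul_right h1 hppos
      have hna3 : (n:ℤ) ≤ a^3 := by
        rw [hcast]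
        calc (p:ℤ) * q ≤ (p:ℤ) * (a * p) := by nlinarith
          _ = a * p^2 := by ring
          _ ≤ a * a^2 := by nlinarith
          _ = a^3 := by ring
      have hfin : a^3 ≤ (a+B)^3 := pow_le_pow_left₀ (by linarith) (by linarith) 3
      linarith

lemma uu_def (P : ℤ) (n : ℕ) : uu P n = lucasU P (-1) n := rfl
lemma vv_def (P : ℤ) (n : ℕ) : vv P n = lucasV P (-1) n := rfl

end SP

theorem stmt_6 (P : ℤ) (m : ℕ) (hm : 1 ≤ m)
    (n : ℕ) (hn : 0 < n)
    (hbig : (n : ℤ) > (|lucasV P (-1) (2 * m)| + |lucasU P (-1) (2 * m) ^ 2 - 1|) ^ 3)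
    (heq : ((ArithmeticFunction.sigma 2) n : ℤ) - (n : ℤ) ^ 2 =
      lucasV P (-1) (2 * m) * n - lucasU P (-1) (2 * m) ^ 2 + 1) :
    (∃ k : ℕ,
      (n : ℤ) = lucasU P (-1) (2 * k + 1) * lucasU P (-1) (2 * k + 2 * m + 1) ∧
      Prime (lucasU P (-1) (2 * k + 1)) ∧ Prime (lucasU P (-1) (2 * k + 2 * m + 1))) ∨
    (∃ k : ℕ, k < m ∧ m ≠ 2 * k + 1 ∧
      (n : ℤ) = lucasU P (-1) (2 * k + 1) * lucasU P (-1) (2 * m - (2 * k + 1)) ∧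
      Prime (lucasU P (-1) (2 * k + 1)) ∧ Prime (lucasU P (-1) (2 * m - (2 * k + 1)))) := by
  rcases le_or_gt 0 P with hP0 | hPneg
  · exact SP.main P hP0 m hm n hn hbig heq
  · have hP0' : (0:ℤ) ≤ -P := by linarith
    have hv : lucasV P (-1) (2*m) = lucasV (-P) (-1) (2*m) := by
      have h := SP.vv_neg (P := -P) (2*m)
      rw [neg_neg] at h
      rw [← SP.vv_def, h, pow_mul]
      norm_num
      rfl
    have hu2 : (lucasU P (-1) (2*m))^2 = (lucasU (-P) (-1) (2*m))^2 := by
      have h := SP.uu_neg (P := -P) (2*m)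
      rw [neg_neg] at h
      rw [← SP.uu_def, h, mul_pow, ← pow_mul,
        Even.neg_one_pow ⟨2*m+1, by ring⟩, one_mul]
      rfl
    have huodd : ∀ j : ℕ, j % 2 = 1 → lucasU P (-1) j = lucasU (-P) (-1) j := by
      intro j hj
      have h := SP.uu_neg (P := -P) j
      rw [neg_neg] at h
      rw [← SP.uu_def, h, Even.neg_one_pow ⟨(j+1)/2, by omega⟩, one_mul]
      rfl
    have hres := SP.main (-P) hP0' m hm n hn
      (by simp only [SP.uu_def, SP.vv_def]; rw [← hv, ← hu2]; exact hbig)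
      (by simp only [SP.uu_def, SP.vv_def]; rw [← hv, ← hu2]; exact heq)
    simp only [SP.uu_def, SP.vv_def] at hres
    rcases hres with ⟨k, hEq, hp1, hp2⟩ | ⟨k, hkm, hmne, hEq, hp1, hp2⟩
    · left
      refine ⟨k, ?_, ?_, ?_⟩
      · rw [huodd (2*k+1) (by omega), huodd (2*k+2*m+1) (by omega)]; exact hEq
      · rw [huodd (2*k+1) (by omega)]; exact hp1
      · rw [huodd (2*k+2*m+1) (by omega)]; exact hp2
    · right
      refine ⟨k, hkm, hmne, ?_, ?_, ?_⟩
      · rw [huodd (2*k+1) (by omega), huodd (2*m - (2*k+1)) (by omega)]; exact hEq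
      · rw [huodd (2*k+1) (by omega)]; exact hp1
      · rw [huodd (2*m - (2*k+1)) (by omega)]; exact hp2
end

section
/- Let P be an integer such that P² + 4 is squarefree, and let m be a positive integer. For every positive integer n with n > (|V_{2m}(P,−1)| + |V_{2m}(P,−1)² − 5|)³, if σ₂(n) − n² = V_{2m}(P,−1)·n − V_{2m}(P,−1)² + 5 (as integers), then either there exists an integer k ≥ 0 such that n = V_{2k}(P,−1) · V_{2k+2m}(P,−1) with both V_{2k}(P,−1) and V_{2k+2m}(P,−1) prime, or there exists an integer k with 0 ≤ k < m and m ≠ 2k such that n = V_{2k}(P,−1) · V_{2m−2k}(P,−1) with both V_{2k}(P,−1) and V_{2m−2k}(P,−1) prime. -/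
namespace StmtAux

variable (p : ℤ)

@[simp] lemma U0 : lucasU p (-1) 0 = 0 := rfl
@[simp] lemma U1 : lucasU p (-1) 1 = 1 := rfl
@[simp] lemma V0 : lucasV p (-1) 0 = 2 := rfl
@[simp] lemma V1 : lucasV p (-1) 1 = p := rfl
lemma Urec (n : ℕ) : lucasU p (-1) (n+2) = p * lucasU p (-1) (n+1) + lucasU p (-1) n := by
  show p * lucasU p (-1) (n + 1) - (-1) * lucasU p (-1) n = _; ring
lemma Vrec (n : ℕ) : lucasV p (-1) (n+2) = p * lucasV p (-1) (n+1) + lucasV p (-1) n := by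
  show p * lucasV p (-1) (n + 1) - (-1) * lucasV p (-1) n = _; ring

local notation "U" => lucasU p (-1)
local notation "V" => lucasV p (-1)
local notation "D" => p^2 + 4

private lemma cancel2 {x y : ℤ} (h : 2 * x = 2 * y) : x = y :=
  mul_left_cancel₀ two_ne_zero h

lemma shift (j : ℕ) : 2 * V (j+1) = p * V j + D * U j ∧ 2 * U (j+1) = V j + p * U j := by
  induction j with
  | zero => refine ⟨?_, ?_⟩ <;> simp <;> ring
  | succ j ih =>
    obtain ⟨hv, hu⟩ := ih
    have rV := Vrec p j
    have rU := Urec p j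
    refine ⟨cancel2 ?_, cancel2 ?_⟩
    · linear_combination 4 * rV + p * hv - (p^2+4) * hu
    · linear_combination 4 * rU - hv + p * hu
    
lemma shiftV (j : ℕ) : 2 * V (j+1) = p * V j + D * U j := (shift p j).1
lemma shiftU (j : ℕ) : 2 * U (j+1) = V j + p * U j := (shift p j).2

lemma norm4 (j : ℕ) : V j ^ 2 - D * U j ^ 2 = 4 * (-1)^j := by
  induction j with
  | zero => simp
  | succ j ih =>
    have hv := shiftV p j
    have hu := shiftU p j
    have key : 4 * (V (j+1) ^ 2 - D * U (j+1) ^ 2) = 4 * (4 * (-1)^(j+1)) := by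
      have expand : 4 * (V (j+1) ^ 2 - D * U (j+1) ^ 2)
          = (p * V j + D * U j)^2 - D * (V j + p * U j)^2 := by
        rw [← hv, ← hu]; ring
      rw [expand]
      have : (p * V j + D * U j)^2 - D * (V j + p * U j)^2
          = -4 * (V j ^2 - D * U j ^2) := by ring
      rw [this, ih]; ring
    have h4 : (4:ℤ) ≠ 0 := by norm_num
    exact mul_left_cancel₀ h4 key

lemma addVU (i j : ℕ) : 2 * V (i+j) = V i * V j + D * U i * U j ∧
    2 * U (i+j) = U i * V j + V i * U j := by
  induction j with
  | zero => refine ⟨?_, ?_⟩ <;> simp <;> ring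
  | succ j ih =>
    obtain ⟨hv, hu⟩ := ih
    have sv := shiftV p (i+j)
    have su := shiftU p (i+j)
    have svj := shiftV p j
    have suj := shiftU p j
    have e : i + (j+1) = (i+j)+1 := by ring
    rw [e]
    refine ⟨cancel2 ?_, cancel2 ?_⟩
    · linear_combination 2 * sv + p * hv + (p^2+4) * hu - V i * svj - (p^2+4) * U i * suj
    · linear_combination 2 * su + hv + p * hu - U i * svj - V i * suj

lemma addV (i j : ℕ) : 2 * V (i+j) = V i * V j + D * U i * U j := (addVU p i j).1
lemma addU (i j : ℕ) : 2 * U (i+j) = U i * V j + V i * U j := (addVU p i j).2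

section pos
variable (hp : 1 ≤ p)
include hp

lemma VUpos (j : ℕ) : 1 ≤ V j ∧ 0 ≤ U j := by
  induction j using Nat.twoStepInduction with
  | zero => simp
  | one => exact ⟨by simpa using hp, by norm_num⟩
  | more j ih1 ih2 =>
    obtain ⟨hv1, hu1⟩ := ih1
    obtain ⟨hv2, hu2⟩ := ih2
    rw [Vrec, Urec]
    constructor <;> nlinarith

lemma Vpos (j : ℕ) : 1 ≤ V j := (VUpos p hp j).1
lemma Unonneg (j : ℕ) : 0 ≤ U j := (VUpos p hp j).2

lemma Upos' (j : ℕ) : 1 ≤ U (j+1) := by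
  induction j using Nat.twoStepInduction with
  | zero => simp
  | one =>
    have := Urec p 0
    simp at this
    rw [this]; exact hp
  | more j ih1 ih2 =>
    rw [Urec]
    nlinarith

lemma Upos (j : ℕ) (hj : 1 ≤ j) : 1 ≤ U j := by
  obtain ⟨i, rfl⟩ : ∃ i, j = i + 1 := ⟨j - 1, by omega⟩
  exact Upos' p hp i

lemma Veven2 (k : ℕ) : 2 ≤ V (2*k) := by
  induction k with
  | zero => simp
  | succ k ih =>
    have e : 2*(k+1) = (2*k) + 2 := by ring
    rw [e, Vrec]
    have := Vpos p hp (2*k+1)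
    nlinarith

end pos

lemma signVU (j : ℕ) : lucasV (-p) (-1) j = (-1)^j * lucasV p (-1) j ∧
    lucasU (-p) (-1) j = -((-1)^j) * lucasU p (-1) j := by
  induction j using Nat.twoStepInduction with
  | zero => simp
  | one => simp
  | more j ih1 ih2 =>
    obtain ⟨hv1, hu1⟩ := ih1
    obtain ⟨hv2, hu2⟩ := ih2
    rw [Vrec, Urec, Vrec, Urec, hv1, hv2, hu1, hu2]
    constructor <;> ring

lemma V_abs_even (k : ℕ) : lucasV p (-1) (2*k) = lucasV |p| (-1) (2*k) := by
  rcases abs_choice p with h | h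
  · rw [h]
  · rw [h, (signVU p (2*k)).1]
    simp [pow_mul]


lemma pell (hp : 1 ≤ p) (hodd : Odd p) :
    ∀ N : ℕ, ∀ y w : ℤ, 0 ≤ y → 0 ≤ w → 3*w + y < (N:ℤ) →
    (y^2 - D*w^2 = 4 ∨ y^2 - D*w^2 = -4) →
    ∃ j, y = V j ∧ w = U j := by
  intro N
  induction N using Nat.strong_induction_on with
  | _ N IH =>
    intro y w hy hw hN hnorm
    have hD5 : 5 ≤ p^2 + 4 := by nlinarith
    rcases eq_or_lt_of_le hw with h0 | hw1
    · -- w = 0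
      have hw0 : w = 0 := h0.symm
      subst hw0
      have hy2 : y = 2 := by
        rcases hnorm with h | h
        · nlinarith [sq_nonneg (y - 2), sq_nonneg (y + 2)]
        · nlinarith [sq_nonneg y]
      exact ⟨0, by simpa using hy2, by simp⟩
    · -- w ≥ 1
      have hw1' : 1 ≤ w := hw1
      have hy1 : 1 ≤ y := by
        rcases lt_or_ge 0 y with h | h
        · exact h
        · exfalso
          have hy0 : y = 0 := le_antisymm h hy
          subst hy0
          rcases hnorm with h | h <;> nlinarith
      -- parity
      have hDodd : Odd (p^2 + 4) := by
        obtain ⟨a, ha⟩ := hodd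
        exact ⟨2*a^2 + 2*a + 2, by rw [ha]; ring⟩
      have hyw : Even (y - w) := by
        rcases Int.even_or_odd y with hy2 | hy2 <;> rcases Int.even_or_odd w with hw2 | hw2
        · exact hy2.sub hw2
        · exfalso
          have hodd2 : Odd (y^2 - (p^2+4)*w^2) := by
            have h1 : Even (y^2) := by rw [sq]; exact hy2.mul_right y
            have h2 : Odd ((p^2+4)*w^2) := hDodd.mul (hw2.pow)
            exact h1.sub_odd h2
          obtain ⟨k, hk⟩ := hodd2
          rcases hnorm with h | h <;> rw [h] at hk <;> omega
        · exfalso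
          have hodd2 : Odd (y^2 - (p^2+4)*w^2) := by
            have h1 : Odd (y^2) := hy2.pow
            have h2 : Even ((p^2+4)*w^2) := by rw [sq w]; exact (hw2.mul_right w).mul_left _
            exact h1.sub_even h2
          obtain ⟨k, hk⟩ := hodd2
          rcases hnorm with h | h <;> rw [h] at hk <;> omega
        · exact hy2.sub_odd hw2
      have hp1e : Even (p - 1) := by
        obtain ⟨a, ha⟩ := hodd
        exact ⟨a, by omega⟩
      obtain ⟨w', hW⟩ : ∃ w', y - w*p = 2*w' := by
        have h1 : Even (w*(p-1)) := hp1e.mul_left w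
        have h2 : Even (y - w*p) := by
          have e : y - w*p = (y - w) - w*(p-1) := by ring
          rw [e]; exact hyw.sub h1
        obtain ⟨r, hr⟩ := h2
        exact ⟨r, by omega⟩
      obtain ⟨y', hY⟩ : ∃ y', w*(p^2+4) - y*p = 2*y' := by
        have h1 : Even (w*(p^2+4-1)) := by
          have : Even (p^2+4-1) := by
            obtain ⟨a, ha⟩ := hDodd
            exact ⟨a, by omega⟩
          exact this.mul_left w
        have h2 : Even (y*(p-1)) := hp1e.mul_left y
        have h3 : Even (w*(p^2+4) - y*p) := by
          have e : w*(p^2+4) - y*p = (w - y) + w*(p^2+4-1) - y*(p-1) := by ring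
          rw [e]
          have hwy : Even (w - y) := by have := hyw.neg; rwa [neg_sub] at this
          exact (hwy.add h1).sub h2
        obtain ⟨r, hr⟩ := h3
        exact ⟨r, by omega⟩
      have hylb : w*p ≤ y := by
        have hsq : (w*p)^2 ≤ y^2 := by rcases hnorm with h | h <;> nlinarith
        nlinarith [mul_pos (lt_of_lt_of_le one_pos hw1') (lt_of_lt_of_le one_pos hp)]
      have hw'0 : 0 ≤ w' := by omega
      have hy'0 : 0 ≤ y' := by
        have hw2 : 1 ≤ w^2 := by nlinarith
        have hDw2 : (p^2+4)*1 ≤ (p^2+4)*w^2 :=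
          mul_le_mul_of_nonneg_left hw2 (by nlinarith : (0:ℤ) ≤ p^2+4)
        have hsq : (y*p)^2 ≤ (w*(p^2+4))^2 := by rcases hnorm with h | h <;> nlinarith
        have hle : y*p ≤ w*(p^2+4) := by
          nlinarith [mul_pos (lt_of_lt_of_le one_pos hy1) (lt_of_lt_of_le one_pos hp),
            mul_pos (lt_of_lt_of_le one_pos hw1') (by nlinarith : (0:ℤ) < p^2+4)]
        omega
      have hnorm' : y'^2 - (p^2+4)*w'^2 = -(y^2 - (p^2+4)*w^2) := by
        have key : 4*(y'^2 - (p^2+4)*w'^2) = 4*(-(y^2 - (p^2+4)*w^2)) := by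
          linear_combination (-(2*y' + (w*(p^2+4) - y*p))) * hY + ((p^2+4)*(2*w' + (y - w*p))) * hW
        linarith
      have hmeas : 3*w' + y' < 3*w + y := by
        have hp3 : p = 1 ∨ 3 ≤ p := by rcases hodd with ⟨a, ha⟩; omega
        rcases hp3 with h | h
        · subst h; linarith
        · nlinarith [mul_le_mul_of_nonneg_right hylb (by linarith : (0:ℤ) ≤ p - 1), hw1']
      obtain ⟨j, hj1, hj2⟩ := IH ((3*w' + y').toNat + 1) (by omega) y' w' hy'0 hw'0 (by omega)
        (by rcases hnorm with h | h
            · right; rw [hnorm', h]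
            · left; rw [hnorm', h]; norm_num)
      have h2y : 2*y = p*y' + (p^2+4)*w' := cancel2 (by linear_combination p*hY + (p^2+4)*hW)
      have h2w : 2*w = y' + p*w' := cancel2 (by linear_combination hY + p*hW)
      refine ⟨j+1, cancel2 ?_, cancel2 ?_⟩
      · rw [shiftV p j, ← hj1, ← hj2]; exact h2y
      · rw [shiftU p j, ← hj1, ← hj2]; exact h2w

lemma sigma2_prime {q : ℕ} (hq : q.Prime) : (ArithmeticFunction.sigma 2) q = 1 + q^2 := by
  rw [ArithmeticFunction.sigma_apply, hq.divisors]
  rw [Finset.sum_insert (by simp [hq.ne_one, Ne.symm hq.ne_one]), Finset.sum_singleton]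
  norm_num

lemma sigma2_lb {n d : ℕ} (hn : 0 < n) (hd : d ∣ n) (h1 : 1 < d) (h2 : d < n) :
    1 + d^2 + n^2 ≤ (ArithmeticFunction.sigma 2) n := by
  rw [ArithmeticFunction.sigma_apply]
  have hsub : ({1, d, n} : Finset ℕ) ⊆ n.divisors := by
    intro x hx
    simp only [Finset.mem_insert, Finset.mem_singleton] at hx
    rcases hx with rfl | rfl | rfl <;> simp [Nat.mem_divisors, hd, hn.ne']
  calc 1 + d^2 + n^2 = ∑ x ∈ ({1, d, n} : Finset ℕ), x^2 := by
        rw [Finset.sum_insert (by simp; omega), Finset.sum_insert (by simp; omega),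
          Finset.sum_singleton]
        ring
    _ ≤ _ := Finset.sum_le_sum_of_subset hsub

lemma sigma2_prime_sq {q : ℕ} (hq : q.Prime) :
    (ArithmeticFunction.sigma 2) (q^2) = 1 + q^2 + q^4 := by
  rw [ArithmeticFunction.sigma_apply, Nat.divisors_prime_pow hq 2, Finset.sum_map]
  simp only [Function.Embedding.coeFn_mk]
  rw [Finset.sum_range_succ, Finset.sum_range_succ, Finset.sum_range_one]
  ring

end StmtAux



open StmtAux in
set_option maxHeartbeats 4000000 in
theorem stmt_9 (P : ℤ) (hsf : Squarefree (P ^ 2 + 4)) (m : ℕ) (hm : 1 ≤ m)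
    (n : ℕ) (hn : 0 < n)
    (hbig : (n : ℤ) > (|lucasV P (-1) (2 * m)| + |lucasV P (-1) (2 * m) ^ 2 - 5|) ^ 3)
    (heq : ((ArithmeticFunction.sigma 2) n : ℤ) - (n : ℤ) ^ 2 =
      lucasV P (-1) (2 * m) * n - lucasV P (-1) (2 * m) ^ 2 + 5) :
    (∃ k : ℕ,
      (n : ℤ) = lucasV P (-1) (2 * k) * lucasV P (-1) (2 * k + 2 * m) ∧
      Prime (lucasV P (-1) (2 * k)) ∧ Prime (lucasV P (-1) (2 * k + 2 * m))) ∨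
    (∃ k : ℕ, k < m ∧ m ≠ 2 * k ∧
      (n : ℤ) = lucasV P (-1) (2 * k) * lucasV P (-1) (2 * m - 2 * k) ∧
      Prime (lucasV P (-1) (2 * k)) ∧ Prime (lucasV P (-1) (2 * m - 2 * k))) := by
  classical
  -- P is odd
  have hPodd : Odd P := by
    rcases Int.even_or_odd P with ⟨t, ht⟩ | h
    · exfalso
      have h4 : (2:ℤ)*2 ∣ P^2+4 := ⟨t^2+1, by rw [ht]; ring⟩
      have := hsf 2 h4
      rcases Int.isUnit_iff.mp this with h | h <;> norm_num at h
    · exact h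
  set p : ℤ := |P| with hpdef
  have hp : 1 ≤ p := by
    have hP0 : P ≠ 0 := by rintro rfl; exact (by norm_num : ¬ Odd (0:ℤ)) hPodd
    have h0 : 0 < p := by rw [hpdef]; exact abs_pos.mpr hP0
    omega
  have hpodd : Odd p := by
    rcases abs_choice P with h | h <;> rw [hpdef, h]
    · exact hPodd
    · exact hPodd.neg
  have hsfp : Squarefree (p^2 + 4) := by rwa [hpdef, sq_abs]
  have hVP : ∀ k : ℕ, lucasV P (-1) (2*k) = lucasV p (-1) (2*k) := fun k => V_abs_even P k
  set Vm : ℤ := lucasV p (-1) (2*m) with hVmdef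
  rw [hVP m] at hbig heq
  set B : ℤ := |Vm| + |Vm^2 - 5| with hBdef
  have hV2 : 2 ≤ Vm := Veven2 p hp m
  have hBV : Vm ≤ B := by
    have := le_abs_self (Vm^2 - 5)
    have := abs_nonneg (Vm^2-5)
    rw [hBdef, abs_of_pos (by linarith : (0:ℤ) < Vm)]; linarith
  have hBV4 : Vm^2 - 4 ≤ B := by
    have := le_abs_self (Vm^2 - 5)
    rw [hBdef, abs_of_pos (by linarith : (0:ℤ) < Vm)]; linarith
  have hB3 : 3 ≤ B := by
    rcases eq_or_lt_of_le hV2 with h | h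
    · rw [hBdef, ← h]; norm_num
    · nlinarith [le_abs_self (Vm^2-5)]
  have hBcube : B ≤ B^3 := by nlinarith [sq_nonneg B, sq_nonneg (B-1), sq_nonneg (B+1)]
  have hnB : (B:ℤ) < (n:ℤ) := by linarith
  have hn28 : 28 ≤ n := by
    have : (27:ℤ) ≤ B^3 := by nlinarith [sq_nonneg (B-3), sq_nonneg B]
    have : (27:ℤ) < n := by linarith
    exact_mod_cast by linarith [this]
  -- n is not prime
  have hnp : ¬ n.Prime := by
    intro hq
    have hσ : (ArithmeticFunction.sigma 2) n = 1 + n^2 := sigma2_prime hq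
    rw [hσ] at heq
    push_cast at heq
    -- 1 = Vm*n - Vm^2 + 5
    have h1 : Vm * n = Vm^2 - 4 := by linarith
    have h2 : (n:ℤ) ≤ Vm * n := by nlinarith [(by exact_mod_cast hn : (0:ℤ) < n)]
    linarith
  -- n is composite : n = a * d
  obtain ⟨a, d, hap, hnd, hamin⟩ :
      ∃ a d : ℕ, a.Prime ∧ n = a * d ∧ (∀ q : ℕ, 2 ≤ q → q ∣ n → a ≤ q) :=
    ⟨n.minFac, n / n.minFac, Nat.minFac_prime (by omega),
      (Nat.mul_div_cancel' (Nat.minFac_dvd n)).symm,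
      fun q h1 h2 => Nat.minFac_le_of_dvd h1 h2⟩
  have ha2 : 2 ≤ a := hap.two_le
  have hd2 : 2 ≤ d := by
    rcases (by omega : d = 0 ∨ d = 1 ∨ 2 ≤ d) with h | h | h
    · rw [h, Nat.mul_zero] at hnd; omega
    · exfalso; rw [h, Nat.mul_one] at hnd; exact hnp (hnd ▸ hap)
    · exact h
  have hdn : d < n := by
    have : 2*d ≤ a*d := Nat.mul_le_mul_right d ha2
    omega
  have hddvd : d ∣ n := ⟨a, by rw [hnd, Nat.mul_comm]⟩
  -- key bound : d^2 ≤ B * n  and  n ≤ B * a^2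
  have hσlb := sigma2_lb hn hddvd (by omega) hdn
  have hd2B : (d:ℤ)^2 ≤ B * n := by
    have hcast : (1:ℤ) + (d:ℤ)^2 + (n:ℤ)^2 ≤ ((ArithmeticFunction.sigma 2) n : ℤ) := by
      exact_mod_cast hσlb
    have h1 : (d:ℤ)^2 ≤ Vm * n - Vm^2 + 4 := by linarith
    have hn0 : (0:ℤ) < n := by exact_mod_cast hn
    nlinarith
  have ha0 : (0:ℤ) < (a:ℤ) := by exact_mod_cast (by omega : 0 < a)
  have hnBa : (n:ℤ) ≤ B * (a:ℤ)^2 := by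
    have hncast : (n:ℤ) = (a:ℤ) * d := by exact_mod_cast hnd
    have hn0 : (0:ℤ) < n := by exact_mod_cast hn
    nlinarith [hd2B]
  -- d is prime
  have hdp : d.Prime := by
    by_contra hdp
    obtain ⟨e, f, he, hdef2⟩ : ∃ e f : ℕ, e.Prime ∧ d = e * f :=
      ⟨d.minFac, d / d.minFac, Nat.minFac_prime (by omega),
        (Nat.mul_div_cancel' (Nat.minFac_dvd d)).symm⟩
    have hed : e ∣ d := ⟨f, hdef2⟩
    have hf2 : 2 ≤ f := by
      rcases (by omega : f = 0 ∨ f = 1 ∨ 2 ≤ f) with h | h | h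
      · rw [h, Nat.mul_zero] at hdef2; omega
      · exfalso; rw [h, Nat.mul_one] at hdef2; exact hdp (hdef2 ▸ he)
      · exact h
    have hfd : f ∣ d := ⟨e, by rw [hdef2, Nat.mul_comm]⟩
    have hae : a ≤ e := hamin e he.two_le (hed.trans hddvd)
    have haf : a ≤ f := hamin f hf2 (hfd.trans hddvd)
    have h3 : a*(a*a) ≤ a*(e*f) := Nat.mul_le_mul (le_refl a) (Nat.mul_le_mul hae haf)
    have h4 : a*(a*a) ≤ n := by rw [hnd, hdef2]; exact h3
    have hcube : (a:ℤ)^3 ≤ (n:ℤ) := by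
      calc (a:ℤ)^3 = ((a*(a*a) : ℕ) : ℤ) := by push_cast; ring
        _ ≤ (n:ℤ) := by exact_mod_cast h4
    have haB : (a:ℤ) ≤ B := by nlinarith [mul_pos ha0 ha0]
    have ha2B : (a:ℤ)^2 ≤ B^2 := by nlinarith
    have : (n:ℤ) ≤ B^3 := by nlinarith
    linarith
  -- a ≠ d
  have hne : a ≠ d := by
    intro h
    subst h
    have hσ : (ArithmeticFunction.sigma 2) n = 1 + a^2 + a^4 := by
      rw [hnd, ← sq]; exact sigma2_prime_sq hap
    rw [hσ] at heq
    have hncast : (n:ℤ) = (a:ℤ) * a := by exact_mod_cast hnd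
    push_cast at heq
    have h1 : (a:ℤ)^2 * (Vm - 1) = Vm^2 - 4 := by nlinarith
    have : (n:ℤ) ≤ (a:ℤ)^2 * (Vm - 1) := by nlinarith
    linarith
  -- sigma multiplicative
  have hσ : (ArithmeticFunction.sigma 2) n = (1 + a^2) * (1 + d^2) := by
    rw [hnd, ArithmeticFunction.isMultiplicative_sigma.map_mul_of_coprime
      ((Nat.coprime_primes hap hdp).mpr hne), sigma2_prime hap, sigma2_prime hdp]
  rw [hσ] at heq
  have hncast : (n:ℤ) = (a:ℤ) * d := by exact_mod_cast hnd
  have heqab : (a:ℤ)^2 + (d:ℤ)^2 - Vm * (a:ℤ) * (d:ℤ) = 4 - Vm^2 := by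
    push_cast at heq
    rw [hncast] at heq
    linear_combination heq
  -- Pell machinery
  set Um : ℤ := lucasU p (-1) (2*m) with hUmdef
  have hDU : Vm^2 - (p^2+4)*Um^2 = 4 := by
    have := norm4 p (2*m)
    rw [pow_mul] at this
    norm_num at this
    exact_mod_cast this
  have hUm1 : 1 ≤ Um := Upos p hp (2*m) (by omega)
  set s : ℤ := 2*(a:ℤ) - Vm*(d:ℤ) with hsdef
  have hs2 : s^2 = ((p^2+4)*Um^2) * ((d:ℤ)^2 - 4) := by
    rw [hsdef]
    linear_combination 4*heqab + ((d:ℤ)^2-4)*hDU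
  have hUdvd : Um ∣ s := by
    have h2 : Um^2 ∣ s^2 := ⟨(p^2+4)*((d:ℤ)^2-4), by rw [hs2]; ring⟩
    exact (Int.pow_dvd_pow_iff (by norm_num : (2:ℕ) ≠ 0)).mp h2
  obtain ⟨r, hr⟩ := hUdvd
  have hr2 : r^2 = (p^2+4)*((d:ℤ)^2-4) := by
    have hU0 : Um ≠ 0 := by linarith
    have key : Um^2 * r^2 = Um^2 * ((p^2+4)*((d:ℤ)^2-4)) := by
      rw [hr] at hs2; linear_combination hs2
    exact mul_left_cancel₀ (pow_ne_zero 2 hU0) key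
  have hDdvd : (p^2+4) ∣ r := by
    refine (hsfp.dvd_pow_iff_dvd (by norm_num : (2:ℕ) ≠ 0)).mp ⟨(d:ℤ)^2-4, hr2⟩
  obtain ⟨w, hw⟩ := hDdvd
  have hD0 : (p^2+4) ≠ 0 := by nlinarith
  have hPell : (d:ℤ)^2 - (p^2+4)*w^2 = 4 := by
    have key : (p^2+4) * ((d:ℤ)^2 - (p^2+4)*w^2) = (p^2+4) * 4 := by
      rw [hw] at hr2; linear_combination -hr2
    exact mul_left_cancel₀ hD0 key
  have hz0 : 0 ≤ (d:ℤ) := by positivity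
  obtain ⟨j, hzV, hwU⟩ := pell p hp hpodd ((3*|w| + (d:ℤ)).toNat + 1) (d:ℤ) |w| hz0 (abs_nonneg w)
    (by omega) (Or.inl (by rw [sq_abs w]; exact hPell))
  have hjeven : Even j := by
    have hnj := norm4 p j
    rw [← hzV, ← hwU, sq_abs w, hPell] at hnj
    exact (neg_one_pow_eq_one_iff_even (by norm_num : (-1:ℤ) ≠ 1)).mp (by linarith)
  obtain ⟨c, hc⟩ := hjeven
  have hc2 : j = 2*c := by omega
  rw [hc2] at hzV hwU
  -- 2x = Vm * V(2c) ± D Um U(2c)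
  have hxprime : Prime (a:ℤ) := Nat.prime_iff_prime_int.mp hap
  have hzprime : Prime (d:ℤ) := Nat.prime_iff_prime_int.mp hdp
  have hs_eq : 2*(a:ℤ) = Vm * lucasV p (-1) (2*c) + (p^2+4)*Um*w := by
    have : s = Um * ((p^2+4) * w) := by rw [hr, hw]
    rw [hsdef] at this
    rw [← hzV]
    linarith [this]
  rcases (abs_eq (Unonneg p hp (2*c))).mp hwU with hww | hww
  · -- w = U(2c) : (a:ℤ) = V(2c + 2m)
    left
    refine ⟨c, ?_, ?_, ?_⟩
    · rw [hVP c, show 2*c+2*m = 2*(c+m) by ring, hVP (c+m), show 2*(c+m) = 2*c+2*m by ring]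
      have hadd := addV p (2*c) (2*m)
      have hxV : (a:ℤ) = lucasV p (-1) (2*c + 2*m) := by
        apply cancel2
        rw [hadd]
        rw [hww] at hs_eq
        linarith [hs_eq]
      rw [← hxV, ← hzV, hncast]
      ring
    · rw [hVP c, ← hzV]; exact hzprime
    · rw [show 2*c+2*m = 2*(c+m) by ring, hVP (c+m), show 2*(c+m) = 2*c+2*m by ring]
      have hadd := addV p (2*c) (2*m)
      have hxV : (a:ℤ) = lucasV p (-1) (2*c + 2*m) := by
        apply cancel2
        rw [hadd]
        rw [hww] at hs_eq
        linarith [hs_eq]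
      rw [← hxV]; exact hxprime
  · -- w = -U(2c)
    rw [hww] at hs_eq
    have hs_eq' : 2*(a:ℤ) = Vm * lucasV p (-1) (2*c) - (p^2+4)*Um*(lucasU p (-1) (2*c)) := by
      linarith [hs_eq]
    rcases Nat.lt_or_ge c m with hcm | hcm
    · -- c < m : (a:ℤ) = V(2(m-c))
      right
      have hk : 2*(m-c) + 2*c = 2*m := by omega
      have haddV := addV p (2*(m-c)) (2*c)
      have haddU := addU p (2*(m-c)) (2*c)
      rw [hk] at haddV haddU
      have hn4 : lucasV p (-1) (2*c)^2 - (p^2+4) * lucasU p (-1) (2*c)^2 = 4 := by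
        have := norm4 p (2*c)
        rw [pow_mul] at this; norm_num at this; exact_mod_cast this
      have hxV : (a:ℤ) = lucasV p (-1) (2*(m-c)) := by
        apply cancel2
        have key : 2*(2*(a:ℤ)) = 2*(2*lucasV p (-1) (2*(m-c))) := by
          linear_combination 2*hs_eq' + lucasV p (-1) (2*c) * haddV
            - (p^2+4) * lucasU p (-1) (2*c) * haddU
            + lucasV p (-1) (2*(m-c)) * hn4
        linarith [key]
      refine ⟨c, hcm, ?_, ?_, ?_, ?_⟩
      · intro hmc
        apply hne
        have : 2*(m-c) = 2*c := by omega
        rw [this] at hxV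
        have : (a:ℤ) = (d:ℤ) := by rw [hxV, hzV]
        exact_mod_cast this
      · rw [hVP c, show 2*m - 2*c = 2*(m-c) by omega, hVP (m-c), ← hzV, ← hxV, hncast]
        ring
      · rw [hVP c, ← hzV]; exact hzprime
      · rw [show 2*m - 2*c = 2*(m-c) by omega, hVP (m-c), ← hxV]; exact hxprime
    · -- c ≥ m : (a:ℤ) = V(2(c-m))
      left
      have hk : 2*(c-m) + 2*m = 2*c := by omega
      have haddV := addV p (2*(c-m)) (2*m)
      have haddU := addU p (2*(c-m)) (2*m)
      rw [hk] at haddV haddU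
      have hxV : (a:ℤ) = lucasV p (-1) (2*(c-m)) := by
        apply cancel2
        have key : 2*(2*(a:ℤ)) = 2*(2*lucasV p (-1) (2*(c-m))) := by
          linear_combination 2*hs_eq' + Vm * haddV - (p^2+4) * Um * haddU
            + lucasV p (-1) (2*(c-m)) * hDU
        linarith [key]
      refine ⟨c - m, ?_, ?_, ?_⟩
      · rw [hVP (c-m), show 2*(c-m)+2*m = 2*c by omega, hVP c, ← hzV, ← hxV, hncast]
      · rw [hVP (c-m), ← hxV]; exact hxprime
      · rw [show 2*(c-m)+2*m = 2*c by omega, hVP c, ← hzV]; exact hzprime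
end

section
/- Let n = p·q^α where p and q are distinct primes, α ≥ 1, and q ≢ 1 (mod 3). If n divides σ₃(n), then n is an even perfect number and n ≠ 28. -/
open Finset in
private lemma aux_sigma_two_pow (k : ℕ) : ArithmeticFunction.sigma 1 (2 ^ k) = mersenne (k + 1) := by
  simp_rw [ArithmeticFunction.sigma_one_apply, mersenne, show 2 = 1 + 1 from rfl,
    ← geom_sum_mul_add 1 (k + 1)]
  norm_num

open Finset in
private lemma aux_geom_perfect (k : ℕ) (pr : (mersenne (k + 1)).Prime) :
    Nat.Perfect (2 ^ k * mersenne (k + 1)) := by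
  rw [Nat.perfect_iff_sum_divisors_eq_two_mul, ← mul_assoc, ← pow_succ', ← ArithmeticFunction.sigma_one_apply,
    mul_comm,
    ArithmeticFunction.isMultiplicative_sigma.map_mul_of_coprime
      ((Odd.coprime_two_right (by simp)).pow_right _),
    aux_sigma_two_pow]
  · simp [pr, Nat.prime_two, ArithmeticFunction.sigma_one_apply]
  · positivity

private lemma aux_cube (r y : ℕ) (hr : r.Prime) (h : r ∣ y^2 + y + 1) : r = 3 ∨ r % 3 = 1 := by
  haveI := Fact.mk hr
  have h0 : ((y : ZMod r)^2 + y + 1) = 0 := by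
    have := (ZMod.natCast_eq_zero_iff (y^2+y+1) r).mpr h
    push_cast at this
    exact this
  by_cases hy1 : (y : ZMod r) = 1
  · left
    have h3 : ((3:ℕ) : ZMod r) = 0 := by
      push_cast
      rw [hy1] at h0
      linear_combination h0
    have := (ZMod.natCast_eq_zero_iff 3 r).mp h3
    exact ((Nat.prime_dvd_prime_iff_eq hr (by norm_num)).mp this)
  · right
    have hy0 : (y : ZMod r) ≠ 0 := by
      intro h'
      rw [h'] at h0
      simp at h0
  -- cube = 1
    have hcube : (y : ZMod r)^3 = 1 := by linear_combination ((y:ZMod r) - 1) * h0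
    have hord : orderOf (y : ZMod r) = 3 := by
      have hdvd3 : orderOf (y:ZMod r) ∣ 3 := orderOf_dvd_of_pow_eq_one hcube
      rcases (Nat.Prime.eq_one_or_self_of_dvd (by norm_num) _ hdvd3) with h1 | h3
      · exact absurd (orderOf_eq_one_iff.mp h1) hy1
      · exact h3
    have hdvd : orderOf (y:ZMod r) ∣ r - 1 :=
      orderOf_dvd_of_pow_eq_one (ZMod.pow_card_sub_one_eq_one hy0)
    rw [hord] at hdvd
    have := hr.two_le
    omega

private lemma aux_nine (y : ℕ) : ¬ (9 ∣ y^2 + y + 1) := by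
  intro h
  have h0 : ((y : ZMod 9)^2 + y + 1) = 0 := by
    have := (ZMod.natCast_eq_zero_iff (y^2+y+1) 9).mpr h
    push_cast at this
    exact this
  have hall : ∀ x : ZMod 9, x^2 + x + 1 ≠ 0 := by decide
  exact hall _ h0

private lemma aux_three (y : ℕ) (h : 3 ∣ y^2 + y + 1) : y % 3 = 1 := by
  have h0 : ((y : ZMod 3)^2 + y + 1) = 0 := by
    have := (ZMod.natCast_eq_zero_iff (y^2+y+1) 3).mpr h
    push_cast at this
    exact this
  have key : ∀ x : ZMod 3, x^2 + x + 1 = 0 → x = 1 := by decide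
  have h1 : (y : ZMod 3) = 1 := key _ h0
  have h2 : y % 3 = 0 ∨ y % 3 = 1 ∨ y % 3 = 2 := by omega
  rcases h2 with h2 | h2 | h2
  · exfalso
    rw [← ZMod.natCast_mod, h2] at h1
    simp at h1
  · exact h2
  · exfalso
    rw [← ZMod.natCast_mod, h2] at h1
    have : ((2:ℕ) : ZMod 3) ≠ 1 := by decide
    exact this h1

private lemma aux_sum_le (a c : ℕ) (ha : 1 ≤ a) (hc : 1 ≤ c) : a + c ≤ a * c + 1 := by
  obtain ⟨a', rfl⟩ : ∃ a', a = a' + 1 := ⟨a - 1, by omega⟩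
  obtain ⟨c', rfl⟩ : ∃ c', c = c' + 1 := ⟨c - 1, by omega⟩
  have : (a'+1) * (c'+1) = a'*c' + a' + c' + 1 := by ring
  omega

private lemma aux_pow2 (j : ℕ) : j + 5 < 2 ^ (j + 3) := by
  induction j with
  | zero => norm_num
  | succ n ih =>
    have h : 2 ^ (n+1+3) = 2 * 2 ^ (n+3) := by ring
    omega
set_option maxHeartbeats 4000000 in
theorem stmt_10 (p q α n : ℕ) (hp : p.Prime) (hq : q.Prime) (hpq : p ≠ q)
    (hα : 1 ≤ α) (hq3 : q % 3 ≠ 1) (hn : n = p * q ^ α)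
    (hdvd : n ∣ (ArithmeticFunction.sigma 3) n) :
    Nat.Perfect n ∧ Even n ∧ n ≠ 28 := by
  have hα0 : α ≠ 0 := by omega
  obtain ⟨m, hm_def⟩ : ∃ m, m = α + 1 := ⟨_, rfl⟩
  obtain ⟨S, hS_def⟩ : ∃ S, S = ∑ i ∈ Finset.range m, (q^3)^i := ⟨_, rfl⟩
  -- sigma computations
  have hσq : ArithmeticFunction.sigma 3 (q^α) = S := by
    rw [ArithmeticFunction.sigma_apply_prime_pow hq, hS_def, hm_def]
    exact Finset.sum_congr rfl (fun i _ => by rw [← pow_mul, mul_comm])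
  have hσp : ArithmeticFunction.sigma 3 p = 1 + p^3 := by
    rw [ArithmeticFunction.sigma_apply, hp.divisors, Finset.sum_pair hp.one_lt.ne]
    norm_num [add_comm]
  have hcop : Nat.Coprime p (q ^ α) := ((Nat.coprime_primes hp hq).mpr hpq).pow_right α
  have hσ : ArithmeticFunction.sigma 3 n = (1 + p^3) * S := by
    rw [hn, ArithmeticFunction.isMultiplicative_sigma.map_mul_of_coprime hcop, hσp, hσq]
  rw [hσ, hn] at hdvd
  -- p ∣ S
  have hpS : p ∣ S := by
    have h1 : p ∣ (1 + p^3) * S := dvd_trans (Dvd.intro _ rfl) hdvd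
    rcases (Nat.Prime.dvd_mul hp).mp h1 with h | h
    · exfalso
      have h3 : p ∣ p^3 := dvd_pow_self p (by norm_num)
      have h4 : p = 1 := Nat.dvd_one.mp ((Nat.dvd_add_right h3).mp (by rwa [add_comm] at h))
      exact hp.one_lt.ne' h4
    · exact h
  -- q ∤ S
  have hqS : ¬ q ∣ S := by
    intro h
    have hS1 : S = q^3 * (∑ i ∈ Finset.range α, (q^3)^i) + 1 := by
      rw [hS_def, hm_def, Finset.sum_range_succ']
      rw [Finset.mul_sum]
      simp [pow_succ, mul_comm]
    rw [hS1] at h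
    have hq3d : q ∣ q^3 * (∑ i ∈ Finset.range α, (q^3)^i) :=
      Dvd.dvd.mul_right (dvd_pow_self q (by norm_num)) _
    have h4 : q = 1 := Nat.dvd_one.mp ((Nat.dvd_add_right hq3d).mp h)
    exact hq.one_lt.ne' h4
  -- q^α ∣ 1 + p^3
  have hqP : q^α ∣ 1 + p^3 := by
    have h1 : q^α ∣ (1 + p^3) * S := dvd_trans ⟨p, by ring⟩ hdvd
    have hcop2 : Nat.Coprime (q^α) S :=
      Nat.Coprime.pow_left α ((Nat.Prime.coprime_iff_not_dvd hq).mpr hqS)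
    exact hcop2.dvd_of_dvd_mul_right h1
  -- geometric split
  have hsplit : p ∣ q^m - 1 ∨ p ∣ (q^m)^2 + q^m + 1 := by
    have h1 : (p:ℤ) ∣ (S:ℤ) := Int.natCast_dvd_natCast.mpr hpS
    have hSgeo : (S:ℤ) * ((q:ℤ)^3 - 1) = ((q:ℤ)^3)^m - 1 := by
      rw [hS_def]
      push_cast
      exact geom_sum_mul _ m
    have h2 : (p:ℤ) ∣ ((q:ℤ)^m - 1) * (((q:ℤ)^m)^2 + (q:ℤ)^m + 1) := by
      have h3 : ((q:ℤ)^m - 1) * (((q:ℤ)^m)^2 + (q:ℤ)^m + 1) = ((q:ℤ)^3)^m - 1 := by ring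
      rw [h3, ← hSgeo]
      exact h1.mul_right _
    have hint : Prime (p:ℤ) := Int.prime_iff_natAbs_prime.mpr (by simpa using hp)
    have hq1 : 1 ≤ q^m := Nat.one_le_pow _ _ hq.pos
    rcases (hint.dvd_mul).mp h2 with h | h
    · left
      have hc : ((q^m - 1 : ℕ) : ℤ) = (q:ℤ)^m - 1 := by
        push_cast [Nat.cast_sub hq1]
        ring
      rw [← hc] at h
      exact_mod_cast h
    · right
      exact_mod_cast h
  by_cases hq3eq : q = 3
  · -- CASE B : q = 3
    subst hq3eq
    have hp_ne3 : p ≠ 3 := hpq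
    have h3p : (3:ℕ) ∣ 1 + p^3 := dvd_trans (dvd_pow_self 3 hα0) hqP
    have hnot1 : p % 3 ≠ 1 := by
      intro h1
      obtain ⟨d, hd⟩ : ∃ d, p = 3*d + 1 := ⟨p/3, by omega⟩
      have he : 1 + p^3 = 3*(9*d^3 + 9*d^2 + 3*d) + 2 := by rw [hd]; ring
      omega
    have hpM : p ∣ 3^m - 1 := by
      rcases hsplit with h | h
      · exact h
      · exfalso
        rcases aux_cube p (3^m) hp h with h3 | h1
        · exact hp_ne3 h3
        · exact hnot1 h1
    by_cases hp2 : p = 2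
    · subst hp2
      have h9 : (3:ℕ)^α ∣ 3^2 := by norm_num at hqP; exact hqP
      have hα2 : α ≤ 2 := (Nat.pow_dvd_pow_iff_le_right (by norm_num : 1 < 3)).mp h9
      interval_cases α
      · subst hn
        have h6 : 2 * 3^1 = 6 := by norm_num
        rw [h6]
        exact ⟨⟨by decide, by decide⟩, ⟨3, by norm_num⟩, by norm_num⟩
      · exfalso
        subst hm_def
        have hS757 : S = 757 := by rw [hS_def]; simp [Finset.sum_range_succ]
        rw [hS757] at hpS
        norm_num at hpS
    · -- p odd, p ≠ 3
      exfalso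
      have hpodd : p % 2 = 1 := (Nat.Prime.eq_two_or_odd hp).resolve_left hp2
      obtain ⟨y, hy⟩ : ∃ y, p = y + 1 := ⟨p-1, by have := hp.two_le; omega⟩
      have hfac : 1 + p^3 = (p+1) * (y^2+y+1) := by rw [hy]; ring
      have h9y : ¬ (9:ℕ) ∣ y^2+y+1 := aux_nine y
      have hv : (3:ℕ)^(α-1) ∣ p + 1 := by
        rw [hfac] at hqP
        by_cases h3y : (3:ℕ) ∣ y^2 + y + 1
        · obtain ⟨w, hw⟩ := h3y
          have h3w : ¬ 3 ∣ w := by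
            intro hW
            obtain ⟨w2, rfl⟩ := hW
            exact h9y ⟨w2, by rw [hw]; ring⟩
          have h1 : 3^α ∣ 3 * ((p+1) * w) := by
            rw [show 3*((p+1)*w) = (p+1)*(3*w) by ring, ← hw]; exact hqP
          have h2 : 3^(α-1) ∣ (p+1) * w := by
            have h3 : (3:ℕ)^α = 3 * 3^(α-1) := by
              conv_lhs => rw [show α = 1 + (α-1) by omega]
              rw [pow_add, pow_one]
            rw [h3] at h1
            exact (mul_dvd_mul_iff_left (by norm_num : (3:ℕ) ≠ 0)).mp h1
          exact (Nat.Coprime.pow_left _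
            ((Nat.Prime.coprime_iff_not_dvd (by norm_num)).mpr h3w)).dvd_of_dvd_mul_right h2
        · have hc : Nat.Coprime (3^α) (y^2+y+1) :=
            Nat.Coprime.pow_left _ ((Nat.Prime.coprime_iff_not_dvd (by norm_num)).mpr h3y)
          exact dvd_trans (pow_dvd_pow 3 (by omega)) (hc.dvd_of_dvd_mul_right hqP)
      obtain ⟨b, hbv⟩ := hv
      have h3m : (3:ℕ)^m = 9 * 3^(α-1) := by
        rw [hm_def, show α + 1 = 2 + (α - 1) by omega, pow_add]
        norm_num
      have hb1 : 1 ≤ b := by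
        rcases Nat.eq_zero_or_pos b with h0 | h
        · rw [h0, mul_zero] at hbv; omega
        · exact h
      have hble : b ≤ p + 1 := Nat.le_of_dvd (by omega) (Dvd.intro_left _ hbv.symm)
      have hkey : (p:ℤ) ∣ (b:ℤ) - 9 := by
        have h1 : (p:ℤ) ∣ (3:ℤ)^m - 1 := by
          have hc : ((3^m - 1 : ℕ) : ℤ) = (3:ℤ)^m - 1 := by
            push_cast [Nat.cast_sub (Nat.one_le_pow m 3 (by norm_num))]
            ring
          rw [← hc]; exact_mod_cast hpM
        have h2 : (p:ℤ) ∣ (b:ℤ) * ((3:ℤ)^m - 1) := h1.mul_left _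
        have h3 : (b:ℤ) * ((3:ℤ)^m - 1) = 9 * (p:ℤ) + (9 - b) := by
          have h3m' : ((3:ℤ))^m = 9 * 3^(α-1 : ℕ) := by exact_mod_cast h3m
          have hbv' : (p:ℤ) + 1 = 3^(α-1:ℕ) * b := by exact_mod_cast hbv
          rw [h3m']
          linear_combination (-9:ℤ) * hbv'
        rw [h3] at h2
        have h4 : (p:ℤ) ∣ (9:ℤ) - b := (dvd_add_right (Dvd.dvd.mul_left dvd_rfl 9)).mp h2
        have h5 : (b:ℤ) - 9 = -((9:ℤ) - b) := by ring
        rw [h5]; exact dvd_neg.mpr h4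
      by_cases hb9 : b = 9
      · subst hb9
        have hpm1 : p + 1 = 3^m := by rw [h3m, hbv]; ring
        have hodd3 : (3:ℕ)^m % 2 = 1 := by
          rw [Nat.pow_mod]; norm_num
        omega
      · have habs : (p:ℤ) ≤ |(b:ℤ) - 9| := by
          refine Int.le_of_dvd (abs_pos.mpr (sub_ne_zero.mpr ?_)) ((dvd_abs _ _).mpr hkey)
          intro hh
          exact hb9 (by exact_mod_cast hh)
        rcases abs_cases ((b:ℤ) - 9) with ⟨he, _⟩ | ⟨he, _⟩ <;> rw [he] at habs
        · -- b ≥ p + 9 : contradiction with b ≤ p + 1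
          omega
        · -- p ≤ 9 - b, so p ≤ 8
          have hp8 : p ≤ 8 := by omega
          have hp2le := hp.two_le
          interval_cases p
          · exact hp2 rfl
          · exact hp_ne3 rfl
          · exact (by norm_num : ¬ Nat.Prime 4) hp
          · -- p = 5
            have hb4 : b = 4 := by omega
            rw [hb4] at hbv
            generalize (3:ℕ)^(α-1) = E at hbv
            omega
          · exact (by norm_num : ¬ Nat.Prime 6) hp
          · -- p = 7
            norm_num at h3p
          · exact (by norm_num : ¬ Nat.Prime 8) hp
  · -- CASE A : q ≠ 3
    have hq2le := hq.two_le
    have hp2 : p ≠ 2 := by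
      intro h2
      subst h2
      have h9 : q^α ∣ 9 := by norm_num at hqP; exact hqP
      have hq9 : q ∣ 9 := dvd_trans (dvd_pow_self q hα0) h9
      have hq3' : q ∣ 3 := hq.dvd_of_dvd_pow
        (show q ∣ 3^2 by rw [show (3:ℕ)^2 = 9 by norm_num]; exact hq9)
      exact hq3eq ((Nat.prime_dvd_prime_iff_eq hq (by norm_num)).mp hq3')
    have hp3le : 3 ≤ p := by have := hp.two_le; omega
    have hpodd : p % 2 = 1 := (Nat.Prime.eq_two_or_odd hp).resolve_left hp2
    obtain ⟨y, hy⟩ : ∃ y, p = y + 1 := ⟨p-1, by omega⟩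
    have hfac : 1 + p^3 = (p+1) * (y^2+y+1) := by rw [hy]; ring
    have hqy : ¬ q ∣ y^2+y+1 := by
      intro h
      rcases aux_cube q y hq h with h3 | h1
      · exact hq3eq h3
      · exact hq3 h1
    have hu : q^α ∣ p+1 := by
      rw [hfac] at hqP
      exact (Nat.Coprime.pow_left α ((hq.coprime_iff_not_dvd).mpr hqy)).dvd_of_dvd_mul_right hqP
    obtain ⟨a, hab⟩ := hu
    have hu2 : 2 ≤ q^α := le_trans hq.two_le (Nat.le_self_pow hα0 q)
    have ha1 : 1 ≤ a := by
      rcases Nat.eq_zero_or_pos a with h0 | h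
      · rw [h0, mul_zero] at hab; omega
      · exact h
    have ha_lt : a < p := by
      have h1 : 2*a ≤ q^α * a := Nat.mul_le_mul_right a hu2
      have h2 : 2*a ≤ p+1 := by rw [hab]; exact h1
      omega
    have hqm : q^m = q^α * q := by rw [hm_def, pow_succ]
    by_cases hM : p ∣ q^m - 1
    · -- Branch 1 : perfect
      have hq_lt_p : q < p := by
        have hqd : q ∣ p + 1 := dvd_trans (dvd_pow_self q hα0) (Dvd.intro _ hab.symm)
        have hqle : q ≤ p + 1 := Nat.le_of_dvd (by omega) hqd
        have hne : q ≠ p + 1 := by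
          intro h
          have h2 : ¬ q % 2 = 1 := by omega
          have := (Nat.Prime.eq_two_or_odd hq).resolve_right h2
          omega
        have hne2 : q ≠ p := fun h => hpq h.symm
        omega
      have hkey : (p:ℤ) ∣ (q:ℤ) - a := by
        have h1 : (p:ℤ) ∣ (q:ℤ)^m - 1 := by
          have hc : ((q^m - 1 : ℕ) : ℤ) = (q:ℤ)^m - 1 := by
            push_cast [Nat.cast_sub (Nat.one_le_pow m q hq.pos)]
            ring
          rw [← hc]; exact_mod_cast hM
        have h2 : (p:ℤ) ∣ (a:ℤ) * ((q:ℤ)^m - 1) := h1.mul_left _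
        have h3 : (a:ℤ) * ((q:ℤ)^m - 1) = (q:ℤ) * p + ((q:ℤ) - a) := by
          have hqm' : (q:ℤ)^m = (q:ℤ)^(α:ℕ) * q := by exact_mod_cast hqm
          have hab' : (p:ℤ) + 1 = (q:ℤ)^(α:ℕ) * a := by exact_mod_cast hab
          linear_combination (a:ℤ) * hqm' - (q:ℤ) * hab'
        rw [h3] at h2
        exact (dvd_add_right (Dvd.dvd.mul_left dvd_rfl (q:ℤ))).mp h2
      have haq : a = q := by
        by_contra hne
        have h0 : ((q:ℤ) - a) ≠ 0 := sub_ne_zero.mpr (fun hh => hne (by exact_mod_cast hh.symm))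
        have habs := Int.le_of_dvd (abs_pos.mpr h0) ((dvd_abs _ _).mpr hkey)
        rcases abs_cases ((q:ℤ) - a) with ⟨he,_⟩|⟨he,_⟩ <;> rw [he] at habs <;> omega
      have hpq1 : p + 1 = q^m := by
        rw [hqm]
        rw [haq] at hab
        exact hab
      have hq2 : q = 2 := by
        rcases hq.eq_two_or_odd with h | h
        · exact h
        · exfalso
          have hqmodd : q^m % 2 = 1 := by rw [Nat.pow_mod, h]; norm_num
          omega
      subst hq2
      have hmer : mersenne (α+1) = p := by
        rw [mersenne]
        rw [hm_def] at hpq1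
        omega
      refine ⟨?_, ?_, ?_⟩
      · have hperf := aux_geom_perfect α (by rwa [hmer])
        rw [hmer] at hperf
        rw [hn, mul_comm]
        exact hperf
      · rw [hn]
        exact Even.mul_left (Nat.even_pow.mpr ⟨even_two, hα0⟩) p
      · intro h28
        rw [hn] at h28
        have hd28 : (2:ℕ)^α ∣ 28 := Dvd.intro_left p h28
        have hα3 : α < 3 := by
          by_contra hge
          have h8 : (2:ℕ)^3 ∣ 2^α := pow_dvd_pow 2 (by omega)
          have h8' : (2:ℕ)^3 ∣ 28 := h8.trans hd28
          norm_num at h8'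
        interval_cases α
        · rw [hm_def] at hpq1
          norm_num at hpq1 h28
          omega
        · rw [hm_def] at hpq1
          norm_num at hpq1
          have hp7 : p = 7 := by omega
          have hS73 : S = 73 := by rw [hS_def, hm_def]; simp [Finset.sum_range_succ]
          rw [hS73, hp7] at hpS
          norm_num at hpS
    · -- Branch 2
      exfalso
      have hA : p ∣ (q^m)^2 + q^m + 1 := hsplit.resolve_left hM
      by_cases hpq2 : p ∣ q^2 + q + 1
      · -- p ∣ q^2+q+1 : then p ∣ m, contradiction
        have hq3d : (p:ℤ) ∣ (q:ℤ)^3 - 1 := by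
          have he : ((q:ℤ)^3 - 1) = ((q:ℤ) - 1) * ((q:ℤ)^2 + q + 1) := by ring
          rw [he]
          exact Dvd.dvd.mul_left (by exact_mod_cast hpq2) _
        have hpm : p ∣ m := by
          have h1 : (p:ℤ) ∣ (S:ℤ) - m := by
            have he : (S:ℤ) - m = ∑ i ∈ Finset.range m, (((q:ℤ)^3)^i - 1) := by
              rw [Finset.sum_sub_distrib, Finset.sum_const, Finset.card_range]
              rw [hS_def]
              push_cast
              ring
            rw [he]
            refine Finset.dvd_sum (fun i _ => dvd_trans hq3d ?_)
            exact ⟨∑ j ∈ Finset.range i, ((q:ℤ)^3)^j, by rw [mul_comm, geom_sum_mul]⟩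
          have h2 : (p:ℤ) ∣ (m:ℤ) := by
            have h3 := dvd_sub (Int.natCast_dvd_natCast.mpr hpS) h1
            simpa using h3
          exact_mod_cast h2
        have hpm_le : p ≤ m := Nat.le_of_dvd (by omega) hpm
        have hum : q^α ≤ p + 1 := Nat.le_of_dvd (by omega) (Dvd.intro _ hab.symm)
        have h2m : 2^α ≤ q^α := Nat.pow_le_pow_left hq.two_le α
        have hsm : 2^α ≤ α + 2 := le_trans h2m (le_trans hum (by omega))
        have hα2 : α ≤ 2 := by
          by_contra hc
          obtain ⟨j, rfl⟩ : ∃ j, α = j + 3 := ⟨α - 3, by omega⟩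
          have := aux_pow2 j
          omega
        interval_cases α
        · rw [hm_def] at hpm_le
          omega
        · have hp3 : p = 3 := by
            rw [hm_def] at hpm
            norm_num at hpm
            exact (Nat.prime_dvd_prime_iff_eq hp (by norm_num)).mp hpm
          rw [hp3] at hpq2
          exact hq3 (aux_three q hpq2)
      · -- Diophantine analysis
        have hA2 := hA
        obtain ⟨k, hk⟩ := hA2
        have hk1 : 1 ≤ k := by
          rcases Nat.eq_zero_or_pos k with h0 | h
          · rw [h0, mul_zero] at hk; omega
          · exact h
        have hudvd : q^α ∣ q^m := ⟨q, hqm⟩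
        have hAm1 : q^α ∣ (q^m)^2 + q^m := by
          refine dvd_add ?_ hudvd
          rw [pow_two]
          exact Dvd.dvd.mul_left hudvd _
        have huk : q^α ∣ k + 1 := by
          have h1 : k * (p+1) = ((q^m)^2 + q^m) + (k+1) := by
            have h2 : k*(p+1) = p*k + k := by ring
            rw [h2, ← hk]
            ring
          have h2 : q^α ∣ k * (p+1) := Dvd.dvd.mul_left (Dvd.intro _ hab.symm) k
          rw [h1] at h2
          exact (Nat.dvd_add_right hAm1).mp h2
        obtain ⟨c, hck⟩ := huk
        have hc1 : 1 ≤ c := by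
          rcases Nat.eq_zero_or_pos c with h0 | h
          · rw [h0, mul_zero] at hck; omega
          · exact h
        have hu0 : ((q:ℤ)^(α:ℕ)) ≠ 0 := pow_ne_zero _ (by exact_mod_cast hq.pos.ne')
        have hab' : (p:ℤ) + 1 = (q:ℤ)^(α:ℕ) * a := by exact_mod_cast hab
        have hck' : (k:ℤ) + 1 = (q:ℤ)^(α:ℕ) * c := by exact_mod_cast hck
        have hk' : ((q:ℤ)^m)^2 + (q:ℤ)^m + 1 = (p:ℤ) * k := by exact_mod_cast hk
        have hqm' : (q:ℤ)^m = (q:ℤ)^(α:ℕ) * q := by exact_mod_cast hqm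
        have hMainZ : (a:ℤ) * c * ((q:ℤ)^(α:ℕ)) = (q:ℤ)^2 * (q:ℤ)^(α:ℕ) + q + a + c := by
          have e4 : ((q:ℤ)^(α:ℕ) * a) * ((q:ℤ)^(α:ℕ) * c) =
              ((q:ℤ)^(α:ℕ) * q)^2 + ((q:ℤ)^(α:ℕ) * q) + ((q:ℤ)^(α:ℕ) * a) + ((q:ℤ)^(α:ℕ) * c) := by
            rw [← hab', ← hck', ← hqm']
            linear_combination -hk'
          have e5 : ((a:ℤ) * c * ((q:ℤ)^(α:ℕ))) * ((q:ℤ)^(α:ℕ)) =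
              ((q:ℤ)^2 * (q:ℤ)^(α:ℕ) + q + a + c) * ((q:ℤ)^(α:ℕ)) := by
            linear_combination e4
          exact mul_right_cancel₀ hu0 e5
        have hMain : a * c * q^α = q^2 * q^α + q + a + c := by exact_mod_cast hMainZ
        have hac_gt : q^2 < a * c := by
          by_contra hle
          push_neg at hle
          have h1 : a*c*q^α ≤ q^2*q^α := Nat.mul_le_mul_right _ hle
          have h2 : 0 < q := hq.pos
          linarith only [hMain, h1, h2]
        obtain ⟨t, ht⟩ : ∃ t, a*c = q^2 + t := ⟨a*c - q^2, (Nat.add_sub_cancel' hac_gt.le).symm⟩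
        have ht1 : 1 ≤ t := by
          rcases Nat.eq_zero_or_pos t with h0 | h
          · rw [h0, add_zero] at ht; rw [ht] at hac_gt; omega
          · exact h
        have hut : q^α * t = a + c + q := by
          rw [ht] at hMain
          have he : (q^2 + t) * q^α = q^2 * q^α + t * q^α := by ring
          rw [he] at hMain
          have h3 : t * q^α = q + a + c := by linarith only [hMain]
          rw [mul_comm]
          linarith only [h3]
        have hsum_le : a + c ≤ a*c + 1 := aux_sum_le a c ha1 hc1
        have hbound : q^α * t ≤ t + (q^2 + q + 1) := by
          have h1 : a + c + q ≤ (q^2 + t + 1) + q := by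
            rw [← ht]
            omega
          linarith only [hut, h1]
        by_cases hαe1 : α = 1
        · -- m = 2
          subst hαe1
          obtain ⟨w, hw⟩ : ∃ w, q = w + 1 := ⟨q-1, by omega⟩
          have hB : p ∣ w^2 + w + 1 := by
            have hfacA : (q^m)^2 + q^m + 1 = (q^2+q+1) * (w^2+w+1) := by
              rw [hm_def, hw]; ring
            rw [hfacA] at hA
            rcases (Nat.Prime.dvd_mul hp).mp hA with h | h
            · exact absurd h hpq2
            · exact h
          obtain ⟨k', hk2⟩ := hB
          have hk2_1 : 1 ≤ k' := by
            rcases Nat.eq_zero_or_pos k' with h0 | h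
            · rw [h0, mul_zero] at hk2; omega
            · exact h
          have hqw : q ∣ w^2 + w := by
            have he : w^2 + w = w * q := by rw [hw]; ring
            rw [he]
            exact Dvd.intro_left w rfl
          have hfq : q ∣ p + 1 := by
            have h1 : q^1 ∣ p + 1 := Dvd.intro _ hab.symm
            simpa using h1
          have hfq2 := hfq
          obtain ⟨f, hfv⟩ := hfq2
          have hgq : q ∣ k' + 1 := by
            have h1 : k' * (p+1) = (w^2 + w) + (k'+1) := by
              have h2 : k'*(p+1) = p*k' + k' := by ring
              rw [h2, ← hk2]
              ring
            have h2 : q ∣ k' * (p+1) := Dvd.dvd.mul_left hfq k'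
            rw [h1] at h2
            exact (Nat.dvd_add_right hqw).mp h2
          obtain ⟨g, hgv⟩ := hgq
          have hf1 : 1 ≤ f := by
            rcases Nat.eq_zero_or_pos f with h0 | h
            · rw [h0, mul_zero] at hfv; omega
            · exact h
          have hg1 : 1 ≤ g := by
            rcases Nat.eq_zero_or_pos g with h0 | h
            · rw [h0, mul_zero] at hgv; omega
            · exact h
          have hq0 : (q:ℤ) ≠ 0 := by
            have := hq.pos
            exact_mod_cast this.ne'
          have hfv' : (p:ℤ) + 1 = q * f := by exact_mod_cast hfv
          have hgv' : (k':ℤ) + 1 = q * g := by exact_mod_cast hgv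
          have hk2' : (w:ℤ)^2 + w + 1 = (p:ℤ) * k' := by exact_mod_cast hk2
          have hwq : (q:ℤ) = (w:ℤ) + 1 := by exact_mod_cast hw
          have hM2 : (q:ℤ) * ((f:ℤ)*g) + 1 = q + f + g := by
            have e4 : ((q:ℤ)*f) * ((q:ℤ)*g) = (q:ℤ)^2 - q + ((q:ℤ)*f) + ((q:ℤ)*g) := by
              rw [← hfv', ← hgv']
              linear_combination (-1 : ℤ) * hk2' - ((q:ℤ) + w) * hwq
            have e5 : ((q:ℤ) * ((f:ℤ)*g) + 1) * q = ((q:ℤ) + f + g) * q := by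
              linear_combination e4
            exact mul_right_cancel₀ hq0 e5
          have hM2' : q * (f*g) + 1 = q + f + g := by exact_mod_cast hM2
          have hfg2 : 2 ≤ f * g := by
            by_contra hcon
            have hfg1 : f * g = 1 := by
              have h1 : 1 ≤ f * g := Nat.one_le_iff_ne_zero.mpr (Nat.mul_ne_zero (by omega) (by omega))
              omega
            have hfle : f ≤ f * g := Nat.le_mul_of_pos_right f hg1
            have hgle : g ≤ f * g := Nat.le_mul_of_pos_left g hf1
            have hfe : f = 1 := by omega
            have hge : g = 1 := by omega
            rw [hfg1, hfe, hge] at hM2'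
            omega
          have hsle : f + g ≤ f*g + 1 := aux_sum_le f g hf1 hg1
          have hq2' : q = 2 := by
            by_contra hqn
            have hq3le : 3 ≤ q := by omega
            have hq3le' : (3:ℤ) ≤ q := by exact_mod_cast hq3le
            have hfg2' : (2:ℤ) ≤ (f:ℤ) * g := by exact_mod_cast hfg2
            have hsle' : (f:ℤ) + g ≤ (f:ℤ)*g + 1 := by exact_mod_cast hsle
            have hint : (0:ℤ) ≤ ((f:ℤ)*g - 2) * ((q:ℤ) - 1) :=
              mul_nonneg (by linarith only [hfg2']) (by linarith only [hq3le'])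
            linarith only [hM2, hsle', hint, hq3le']
          subst hq2'
          have hfg : f * g = 2 := by
            have h1 : f*g ≤ 2 := by linarith only [hM2', hsle]
            omega
          have hf2 : f ≤ 2 := Nat.le_of_dvd (by norm_num) ⟨g, hfg.symm⟩
          interval_cases f
          · have hp1 : p = 1 := by omega
            rw [hp1] at hp
            norm_num at hp
          · have hp3 : p = 3 := by omega
            apply hM
            rw [hp3, hm_def]
            norm_num
        · have hαge2 : 2 ≤ α := by omega
          by_cases hαe2 : α = 2
          · -- m = 3
            subst hαe2
            have hboundZ : (q:ℤ)^2 * t ≤ (t:ℤ) + ((q:ℤ)^2 + q + 1) := by exact_mod_cast hbound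
            have hq2le' : (2:ℤ) ≤ (q:ℤ) := by exact_mod_cast hq2le
            have hcases : t = 1 ∨ (t = 2 ∧ q = 2) := by
              by_cases ht2 : t = 1
              · left; exact ht2
              · right
                have ht2' : 2 ≤ t := by omega
                have ht2'' : (2:ℤ) ≤ (t:ℤ) := by exact_mod_cast ht2'
                constructor
                · by_contra ht3
                  have ht3' : 3 ≤ t := by omega
                  have ht3'' : (3:ℤ) ≤ (t:ℤ) := by exact_mod_cast ht3'
                  have hint1 : (0:ℤ) ≤ ((t:ℤ)-3)*(((q:ℤ)-1)*((q:ℤ)+1)) :=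
                    mul_nonneg (by linarith only [ht3'']) (mul_nonneg (by linarith only [hq2le']) (by linarith only [hq2le']))
                  have hint2 : (0:ℤ) ≤ ((q:ℤ)-2)*(q:ℤ) :=
                    mul_nonneg (by linarith only [hq2le']) (by linarith only [hq2le'])
                  have hint1e : (0:ℤ) ≤ (t:ℤ)*(q:ℤ)^2 - t - 3*(q:ℤ)^2 + 3 := by linear_combination hint1
                  have hint2e : (0:ℤ) ≤ (q:ℤ)^2 - 2*q := by linear_combination hint2
                  linarith only [hboundZ, hint1e, hint2e, hq2le']
                · by_contra hqn
                  have hq3le : (3:ℤ) ≤ (q:ℤ) := by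
                    have : 3 ≤ q := by omega
                    exact_mod_cast this
                  have hint1 : (0:ℤ) ≤ ((t:ℤ)-2)*(((q:ℤ)-1)*((q:ℤ)+1)) :=
                    mul_nonneg (by linarith only [ht2'']) (mul_nonneg (by linarith only [hq3le]) (by linarith only [hq3le]))
                  have hint2 : (0:ℤ) ≤ ((q:ℤ)-3)*(q:ℤ) :=
                    mul_nonneg (by linarith only [hq3le]) (by linarith only [hq3le])
                  have hint1e : (0:ℤ) ≤ (t:ℤ)*(q:ℤ)^2 - t - 2*(q:ℤ)^2 + 2 := by linear_combination hint1
                  have hint2e : (0:ℤ) ≤ (q:ℤ)^2 - 3*q := by linear_combination hint2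
                  linarith only [hboundZ, hint1e, hint2e, hq3le]
            rcases hcases with ht1' | ⟨ht2', hq2'⟩
            · -- t = 1
              have hsum : a + c + q = q^2 := by
                have h1 := hut
                rw [ht1', mul_one] at h1
                linarith only [h1]
              have hprod : a*c = q^2 + 1 := by rw [ht1'] at ht; exact ht
              have ha2 : 2 ≤ a := by
                by_contra hcon
                have ha1' : a = 1 := by omega
                rw [ha1', one_mul] at hprod
                rw [ha1'] at hsum
                -- 1 + c + q = q^2 and c = q^2+1
                rw [hprod] at hsum
                omega
              have hc2 : 2 ≤ c := by
                by_contra hcon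
                have hc1' : c = 1 := by omega
                rw [hc1', mul_one] at hprod
                rw [hc1'] at hsum
                rw [hprod] at hsum
                omega
              have hq2'' : q = 2 := by
                by_contra hqn
                have h4 : q ≠ 4 := by
                  intro h4
                  rw [h4] at hq
                  norm_num at hq
                have hq5 : 5 ≤ q := by omega
                have hsum' : (a:ℤ) + c + q = (q:ℤ)^2 := by exact_mod_cast hsum
                have hprod' : (a:ℤ) * c = (q:ℤ)^2 + 1 := by exact_mod_cast hprod
                have ha2' : (2:ℤ) ≤ (a:ℤ) := by exact_mod_cast ha2
                have hc2' : (2:ℤ) ≤ (c:ℤ) := by exact_mod_cast hc2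
                have hq5' : (5:ℤ) ≤ (q:ℤ) := by exact_mod_cast hq5
                have hj1 : (0:ℤ) ≤ ((a:ℤ) - 2) * ((c:ℤ) - 2) :=
                  mul_nonneg (by linarith only [ha2']) (by linarith only [hc2'])
                have hj1e : (0:ℤ) ≤ (a:ℤ)*c - 2*a - 2*c + 4 := by linear_combination hj1
                have hj2 : (0:ℤ) ≤ ((q:ℤ) - 5) * (q:ℤ) :=
                  mul_nonneg (by linarith only [hq5']) (by linarith only [hq5'])
                have hj2e : (0:ℤ) ≤ (q:ℤ)^2 - 5*q := by linear_combination hj2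
                linarith only [hsum', hprod', hj1e, hj2e, hq5']
              rw [hq2''] at hsum
              norm_num at hsum
              omega
            · -- t = 2, q = 2
              subst hq2'
              rw [ht2'] at hut ht
              norm_num at hut ht
              have hale : a ≤ a * c := Nat.le_mul_of_pos_right a hc1
              have ha6 : a ≤ 6 := by omega
              interval_cases a <;> omega
          · -- m ≥ 4
            have hα3' : 3 ≤ α := by omega
            have huq3 : q^3 ≤ q^α := Nat.pow_le_pow_right hq.pos (by omega)
            obtain ⟨t', rfl⟩ : ∃ t', t = t' + 1 := ⟨t - 1, by omega⟩
            have hu_le : q^α ≤ q^2 + q + 2 := by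
              have h1 : q^α * (t'+1) = q^α * t' + q^α := by ring
              have h2 : t' ≤ q^α * t' := Nat.le_mul_of_pos_left t' (by omega)
              linarith only [hbound, h1, h2]
            have hq2' : q = 2 := by
              by_contra hqn
              have hq3le : 3 ≤ q := by omega
              have e1 : q^3 = q * q^2 := by ring
              have e2 : q^2 = q*q := by ring
              have h1 : 3*q^2 ≤ q*q^2 := Nat.mul_le_mul_right _ hq3le
              have h2 : 3*q ≤ q*q := Nat.mul_le_mul_right _ hq3le
              linarith only [huq3, hu_le, e1, e2, h1, h2, hq2le]
            subst hq2'
            have hu8 : (2:ℕ)^α = 8 := by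
              have h1 : (2:ℕ)^3 ≤ 2^α := Nat.pow_le_pow_right (by norm_num) (by omega)
              norm_num at hu_le h1
              omega
            rw [hu8] at hbound hut hab
            norm_num at hbound hut
            have ht1'' : t' = 0 := by omega
            subst ht1''
            norm_num at hbound hut ht
            -- hut : 8 = a + c + 2, ht : a*c = 5
            have hale : a ≤ a * c := Nat.le_mul_of_pos_right a hc1
            have ha6 : a ≤ 6 := by omega
            interval_cases a
            · -- a = 1 : p = 7 divides q^2+q+1 = 7
              have hp7 : p = 7 := by omega
              apply hpq2
              rw [hp7]
              norm_num
            · omega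
            · omega
            · omega
            · -- a = 5 : p = 39
              have hp39 : p = 39 := by omega
              rw [hp39] at hp
              norm_num at hp
            · omega
end

section
/- Let u, v, A_0, A_1 be integers and let (A_n) be the integer sequence defined by the recurrence A_n = u·A_{n−1} + v·A_{n−2} for n ≥ 2. Then for all integers n ≥ r ≥ 1, A_{n+r}·A_{n−r} − A_n² = (−v)^{n−r} · s(r−1, u, v)² · (v·A_0² + u·A_0·A_1 − A_1²), where s(k, u, v) = Σ_{i=0}^{⌊k/2⌋} C(k−i, i)·u^{k−2i}·v^{i}. -/
/-- `s k u v = ∑_{i=0}^{⌊k/2⌋} C(k-i, i) * u^(k-2i) * v^i`. -/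
def sPoly (k : ℕ) (u v : ℤ) : ℤ :=
  ∑ i ∈ Finset.range (k / 2 + 1), (Nat.choose (k - i) i : ℤ) * u ^ (k - 2 * i) * v ^ i

namespace Stmt17

def F (u v : ℤ) : ℕ → ℤ
  | 0 => 1
  | 1 => u
  | k+2 => u * F u v (k+1) + v * F u v k

def G (u v : ℤ) : ℕ → ℤ
  | 0 => 0
  | k+1 => F u v k

lemma F_add_two (u v : ℤ) (k : ℕ) : F u v (k+2) = u * F u v (k+1) + v * F u v k := rfl

lemma F_succ (u v : ℤ) (k : ℕ) : F u v (k+1) = u * F u v k + v * G u v k := by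
  cases k with
  | zero => simp [F, G]
  | succ j => rfl

lemma sPoly_big (k : ℕ) (u v : ℤ) :
    sPoly k u v = ∑ i ∈ Finset.range (k+1), (Nat.choose (k - i) i : ℤ) * u ^ (k - 2*i) * v ^ i := by
  rw [sPoly]
  apply Finset.sum_subset
  · intro i hi; simp only [Finset.mem_range] at hi ⊢; omega
  · intro i hi hni
    simp only [Finset.mem_range] at hi hni
    have : k - i < i := by omega
    rw [Nat.choose_eq_zero_of_lt this]
    simp

lemma sPoly_rec (k : ℕ) (u v : ℤ) :
    sPoly (k+2) u v = u * sPoly (k+1) u v + v * sPoly k u v := by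
  rw [sPoly_big, sPoly_big, sPoly_big, Finset.mul_sum, Finset.mul_sum]
  rw [Finset.sum_range_succ' (fun i => ((Nat.choose (k+2-i) i : ℤ) * u^(k+2-2*i) * v^i)) (k+2)]
  rw [Finset.sum_range_succ' (fun i => u * ((Nat.choose (k+1-i) i : ℤ) * u^(k+1-2*i) * v^i)) (k+1)]
  have hext : ∑ j ∈ Finset.range (k+2),
      u * ((Nat.choose (k+1-(j+1)) (j+1) : ℤ) * u^(k+1-2*(j+1)) * v^(j+1))
      = ∑ j ∈ Finset.range (k+1),
      u * ((Nat.choose (k+1-(j+1)) (j+1) : ℤ) * u^(k+1-2*(j+1)) * v^(j+1)) := by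
    rw [Finset.sum_range_succ]
    have h : k+1-(k+1+1) = 0 := by omega
    rw [h, Nat.choose_eq_zero_of_lt (by omega)]
    simp
  have hext2 : ∑ i ∈ Finset.range (k+2),
      v * ((Nat.choose (k-i) i : ℤ) * u^(k-2*i) * v^i)
      = ∑ i ∈ Finset.range (k+1),
      v * ((Nat.choose (k-i) i : ℤ) * u^(k-2*i) * v^i) := by
    rw [Finset.sum_range_succ]
    have h : k-(k+1) = 0 := by omega
    rw [h, Nat.choose_eq_zero_of_lt (by omega)]
    simp
  rw [← hext, ← hext2, add_right_comm, ← Finset.sum_add_distrib]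
  have hterm : ∀ j ∈ Finset.range (k+2),
      ((Nat.choose (k+2-(j+1)) (j+1) : ℤ) * u^(k+2-2*(j+1)) * v^(j+1))
      = u * ((Nat.choose (k+1-(j+1)) (j+1) : ℤ) * u^(k+1-2*(j+1)) * v^(j+1))
        + v * ((Nat.choose (k-j) j : ℤ) * u^(k-2*j) * v^j) := by
    intro j hj
    simp only [Finset.mem_range] at hj
    by_cases hjk : j ≤ k
    · have e1 : k+2-(j+1) = (k-j)+1 := by omega
      have e2 : k+1-(j+1) = k-j := by omega
      rw [e1, e2, Nat.choose_succ_succ]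
      by_cases h2 : 2*j+1 ≤ k
      · have e3 : k+2-2*(j+1) = k-2*j := by omega
        have e4 : k-2*j = (k+1-2*(j+1)) + 1 := by omega
        rw [e3, e4, pow_succ]
        push_cast
        ring
      · have hz : (k-j) < j+1 := by omega
        rw [Nat.choose_eq_zero_of_lt hz]
        have e3 : k+2-2*(j+1) = 0 := by omega
        have e4 : k-2*j = 0 := by omega
        rw [e3, e4]
        push_cast
        ring
    · have e1 : k+2-(j+1) = 0 := by omega
      have e2 : k+1-(j+1) = 0 := by omega
      have e3 : k-j = 0 := by omega
      have hj1 : Nat.choose 0 (j+1) = 0 := Nat.choose_eq_zero_of_lt (by omega)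
      have hj2 : Nat.choose 0 j = 0 := Nat.choose_eq_zero_of_lt (by omega)
      rw [e1, e2, e3, hj1, hj2]
      push_cast
      ring
  rw [Finset.sum_congr rfl hterm]
  have h0 : k+2-2*0 = k+2 := by omega
  have h1 : k+1-2*0 = k+1 := by omega
  simp only [Nat.sub_zero, h0, h1, Nat.choose_zero_right, Nat.cast_one]
  ring

lemma sPoly_eq_F (u v : ℤ) : ∀ k, sPoly k u v = F u v k := by
  intro k
  induction k using Nat.twoStepInduction with
  | zero => simp [sPoly, F]
  | one => simp [sPoly, F]
  | more k ih1 ih2 => rw [sPoly_rec, F_add_two, ih1, ih2]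

lemma shift (u v : ℤ) (B : ℕ → ℤ) (hB : ∀ m, B (m+2) = u * B (m+1) + v * B m) :
    ∀ k m, B (m + k + 1) = F u v k * B (m+1) + v * G u v k * B m := by
  intro k
  induction k using Nat.twoStepInduction with
  | zero => intro m; simp [F, G]
  | one =>
    intro m
    have h : m + 1 + 1 = m + 2 := by ring
    simp only [h, hB m, F, G]
    ring
  | more k ih1 ih2 =>
    intro m
    have h3 : m + (k+2) + 1 = (m + k + 1) + 2 := by ring
    rw [h3, hB (m+k+1)]
    have e1 : m + k + 1 + 1 = m + (k+1) + 1 := by ring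
    rw [e1, ih2 m, ih1 m, F_add_two,
      show G u v (k+2) = F u v (k+1) from rfl, show G u v (k+1) = F u v k from rfl, F_succ]
    ring

lemma doubling_odd (u v : ℤ) (k : ℕ) :
    F u v (2*k+1) = u * F u v k ^ 2 + 2 * v * F u v k * G u v k := by
  have h := shift u v (F u v) (fun m => F_add_two u v m) k k
  have e : k + k + 1 = 2*k+1 := by ring
  rw [e] at h
  rw [h, F_succ]
  ring

lemma doubling_even (u v : ℤ) (k : ℕ) :
    F u v (2*k) = F u v k ^ 2 + v * G u v k ^ 2 := by
  cases k with
  | zero => simp [F, G]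
  | succ j =>
    have h := shift u v (F u v) (fun m => F_add_two u v m) (j+1) j
    have e : j + (j+1) + 1 = 2*(j+1) := by ring
    rw [e] at h
    rw [h, show G u v (j+1) = F u v j from rfl]
    ring

lemma Ecas (u v : ℤ) (A : ℕ → ℤ) (hA : ∀ m, A (m+2) = u*A (m+1)+v*A m) (m : ℕ) :
    v * A m^2 + u * A m * A (m+1) - A (m+1)^2
      = (-v)^m * (v * A 0^2 + u * A 0 * A 1 - A 1^2) := by
  induction m with
  | zero => simp
  | succ m ih =>
    rw [pow_succ, show m + 1 + 1 = m + 2 from rfl, hA m]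
    linear_combination (-v) * ih

end Stmt17

theorem stmt_17 (u v : ℤ) (A : ℕ → ℤ)
    (hrec : ∀ n : ℕ, 2 ≤ n → A n = u * A (n - 1) + v * A (n - 2))
    (n r : ℕ) (hr : 1 ≤ r) (hrn : r ≤ n) :
    A (n + r) * A (n - r) - A n ^ 2 =
      (-v) ^ (n - r) * sPoly (r - 1) u v ^ 2 *
        (v * A 0 ^ 2 + u * A 0 * A 1 - A 1 ^ 2) := by
  have hA : ∀ m, A (m+2) = u * A (m+1) + v * A m := by
    intro m
    have := hrec (m+2) (by omega)
    simpa using this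
  obtain ⟨k, rfl⟩ : ∃ k, r = k + 1 := ⟨r - 1, by omega⟩
  obtain ⟨m, rfl⟩ : ∃ m, n = m + k + 1 := ⟨n - (k+1), by omega⟩
  have e1 : m + k + 1 + (k + 1) = m + (2*k+1) + 1 := by ring
  have e2 : m + k + 1 - (k + 1) = m := by omega
  have e3 : k + 1 - 1 = k := by omega
  rw [e1, e2, e3, Stmt17.sPoly_eq_F,
    Stmt17.shift u v A hA (2*k+1) m, Stmt17.shift u v A hA k m,
    show Stmt17.G u v (2*k+1) = Stmt17.F u v (2*k) from rfl,
    Stmt17.doubling_odd, Stmt17.doubling_even]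
  linear_combination (Stmt17.F u v k)^2 * Stmt17.Ecas u v A hA m
end

section
/- Let P be a positive integer. Nonnegative integers x and y satisfy x² − (P² + 4)·y² = 4 if and only if there exists an integer k ≥ 0 such that x = V_{2k}(P,−1) and y = U_{2k}(P,−1). -/
lemma lucasU_rec (P : ℤ) (n : ℕ) :
    lucasU P (-1) (n + 2) = P * lucasU P (-1) (n + 1) + lucasU P (-1) n := by
  show P * lucasU P (-1) (n + 1) - (-1) * lucasU P (-1) n = _
  ring

lemma lucasV_rec (P : ℤ) (n : ℕ) :
    lucasV P (-1) (n + 2) = P * lucasV P (-1) (n + 1) + lucasV P (-1) n := by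
  show P * lucasV P (-1) (n + 1) - (-1) * lucasV P (-1) n = _
  ring

lemma lucasE (P : ℤ) (n : ℕ) :
    lucasU P (-1) (n+1) ^ 2 - P * lucasU P (-1) (n+1) * lucasU P (-1) n
      - lucasU P (-1) n ^ 2 = (-1) ^ n := by
  induction n with
  | zero => simp [lucasU]
  | succ n ih =>
    have r := lucasU_rec P n
    linear_combination (lucasU P (-1) (n+2) + lucasU P (-1) n) * r - ih

lemma lucasUV (P : ℤ) (n : ℕ) :
    lucasV P (-1) n = 2 * lucasU P (-1) (n+1) - P * lucasU P (-1) n := by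
  induction n using Nat.twoStepInduction with
  | zero => simp [lucasU, lucasV]
  | one => show P = 2 * (P * 1 - (-1) * 0) - P * 1; ring
  | more n ih1 ih2 =>
    have r1 := lucasU_rec P n
    have r2 := lucasU_rec P (n+1)
    have rv := lucasV_rec P n
    linear_combination rv + P * ih2 + ih1 - 2 * r2 + P * r1

lemma lucasPellEven (P : ℤ) (k : ℕ) :
    lucasV P (-1) (2*k) ^ 2 - (P^2 + 4) * lucasU P (-1) (2*k) ^ 2 = 4 := by
  have h := lucasE P (2*k)
  have h1 : ((-1:ℤ)) ^ (2*k) = 1 := by rw [pow_mul]; norm_num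
  rw [h1] at h
  have h2 := lucasUV P (2*k)
  linear_combination (lucasV P (-1) (2*k) + 2 * lucasU P (-1) (2*k+1)
    - P * lucasU P (-1) (2*k)) * h2 + 4 * h

lemma lucasU2step (P : ℤ) (n : ℕ) :
    2 * lucasU P (-1) (n+2) = (P^2+2) * lucasU P (-1) n + P * lucasV P (-1) n := by
  have r1 := lucasU_rec P n
  have h4 := lucasUV P n
  linear_combination 2 * r1 - P * h4

lemma lucasV2step (P : ℤ) (n : ℕ) :
    2 * lucasV P (-1) (n+2) = (P^2+4) * P * lucasU P (-1) n + (P^2+2) * lucasV P (-1) n := by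
  have h1 := lucasUV P (n+2)
  have h2 := lucasU_rec P (n+1)
  have h3 := lucasU_rec P n
  have h4 := lucasUV P n
  linear_combination 2 * h1 + 4 * h2 + 2 * P * h3 - (P^2+2) * h4

lemma forwardAux (P : ℤ) (hP : 0 < P) : ∀ y : ℕ, ∀ x : ℕ,
    (x : ℤ) ^ 2 - (P ^ 2 + 4) * (y : ℤ) ^ 2 = 4 →
    ∃ k : ℕ, (x : ℤ) = lucasV P (-1) (2 * k) ∧ (y : ℤ) = lucasU P (-1) (2 * k) := by
  intro y
  induction y using Nat.strong_induction_on with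
  | _ y ih =>
    intro x hx
    rcases Nat.eq_zero_or_pos y with hy0 | hy0
    · subst hy0
      have hx2 : ((x:ℤ) - 2) * ((x:ℤ) + 2) = 0 := by
        push_cast at hx ⊢; linear_combination hx
      have hxn : (0:ℤ) ≤ (x:ℤ) := Int.natCast_nonneg x
      rcases mul_eq_zero.mp hx2 with h | h
      · exact ⟨0, by simpa [lucasV] using by linarith, by simp [lucasU]⟩
      · exfalso; linarith
    · have hy1 : (1:ℤ) ≤ (y:ℤ) := by exact_mod_cast hy0
      have hxn : (0:ℤ) ≤ (x:ℤ) := Int.natCast_nonneg x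
      have hPy : 0 < P * (y:ℤ) := mul_pos hP (by linarith)
      -- x > P*y
      have hxPy : P * (y:ℤ) < (x:ℤ) := by
        nlinarith [hx, sq_nonneg ((x:ℤ) + P * y)]
      -- y ≥ P
      have hyP : P ≤ (y:ℤ) := by
        by_contra hlt
        push_neg at hlt
        have hup : (x:ℤ) < P * y + 2 := by
          nlinarith [hx, sq_nonneg ((x:ℤ) + P * y + 2)]
        have hxeq : (x:ℤ) = P * y + 1 := by omega
        have : 2 * (P * (y:ℤ)) + 1 = 4 * ((y:ℤ)*(y:ℤ)) + 4 := by
          linear_combination hx - (P*(y:ℤ) + (x:ℤ) + 1) * hxeq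
        omega
      -- parity : x - P*y is even
      have hpar : ∃ c : ℤ, (x:ℤ) = P * y + 2 * c := by
        rcases Int.even_or_odd ((x:ℤ) - P * y) with ⟨c, hc⟩ | ⟨c, hc⟩
        · exact ⟨c, by linarith⟩
        · exfalso
          have hxeq : (x:ℤ) = P * y + 2*c + 1 := by linarith
          have : 4*(P*(y:ℤ)*c) + 2*(P*(y:ℤ)) + 4*(c*c) + 4*c + 1
              = 4*((y:ℤ)*(y:ℤ)) + 4 := by
            linear_combination hx - ((x:ℤ) + P*y + 2*c + 1) * hxeq
          omega
      obtain ⟨c, hc⟩ := hpar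
      have hc1 : 1 ≤ c := by nlinarith
      have hx' : (P*(y:ℤ) + 2*c)^2 - (P^2+4)*(y:ℤ)^2 = 4 := by
        linear_combination hx - ((x:ℤ) + P*y + 2*c) * hc
      set X : ℤ := c*P^2 + 2*c - P*y with hXdef
      set Y : ℤ := (y:ℤ) - c*P with hYdef
      have hXY : X^2 - (P^2+4)*Y^2 = 4 := by
        rw [hXdef, hYdef]; linear_combination hx'
      have hY0 : 0 ≤ Y := by
        have key : 2*Y*((y:ℤ)*(P^2+2) + (P*(y:ℤ)+2*c)*P) = 4*(y:ℤ)^2 - 4*P^2 := by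
          rw [hYdef]; linear_combination (-(P^2)) * hx'
        nlinarith [key, hyP, hy1, hP, hc1]
      have hX0 : 0 ≤ X := by
        have key : 2*X*((P*(y:ℤ)+2*c)*(P^2+2) + (P^2+4)*(y:ℤ)*P)
            = 4*(P^2+4)*(y:ℤ)^2 + 4*(P^2+2)^2 := by
          rw [hXdef]; linear_combination ((P^2+2)^2) * hx'
        nlinarith [key, hy1, hP, hc1]
      have hYlt : Y < (y:ℤ) := by
        have : 1 ≤ c * P := by nlinarith
        rw [hYdef]; linarith
      have hYnat : (Y.toNat : ℤ) = Y := Int.toNat_of_nonneg hY0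
      have hXnat : (X.toNat : ℤ) = X := Int.toNat_of_nonneg hX0
      have hYlt' : Y.toNat < y := by omega
      obtain ⟨k, hkV, hkU⟩ := ih Y.toNat hYlt' X.toNat (by rw [hXnat, hYnat]; exact hXY)
      rw [hXnat] at hkV
      rw [hYnat] at hkU
      refine ⟨k + 1, ?_, ?_⟩
      · have h2 : 2*(k+1) = 2*k + 2 := by ring
        rw [h2]
        have hs := lucasV2step P (2*k)
        rw [← hkV, ← hkU] at hs
        rw [hXdef] at hs; rw [hYdef] at hs
        have : 2*(x:ℤ) = 2 * lucasV P (-1) (2*k+2) := by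
          rw [hs]; linear_combination 2 * hc
        linarith
      · have h2 : 2*(k+1) = 2*k + 2 := by ring
        rw [h2]
        have hs := lucasU2step P (2*k)
        rw [← hkV, ← hkU] at hs
        rw [hXdef] at hs; rw [hYdef] at hs
        have : 2*(y:ℤ) = 2 * lucasU P (-1) (2*k+2) := by
          rw [hs]; ring
        linarith

theorem stmt_18 (P : ℤ) (hP : 0 < P) (x y : ℕ) :
    (x : ℤ) ^ 2 - (P ^ 2 + 4) * (y : ℤ) ^ 2 = 4 ↔
    ∃ k : ℕ, (x : ℤ) = lucasV P (-1) (2 * k) ∧ (y : ℤ) = lucasU P (-1) (2 * k) := by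
  constructor
  · exact forwardAux P hP y x
  · rintro ⟨k, hx, hy⟩
    rw [hx, hy]
    exact lucasPellEven P k
end

section
/- Let P be a positive integer. Nonnegative integers x and y satisfy x² − (P² + 4)·y² = −4 if and only if there exists an integer k ≥ 0 such that x = V_{2k+1}(P,−1) and y = U_{2k+1}(P,−1). -/
lemma uRec (P : ℤ) (n : ℕ) : lucasU P (-1) (n+2) = P * lucasU P (-1) (n+1) + lucasU P (-1) n := by
  show P * _ - (-1) * _ = _; ring

lemma vRec (P : ℤ) (n : ℕ) : lucasV P (-1) (n+2) = P * lucasV P (-1) (n+1) + lucasV P (-1) n := by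
  show P * _ - (-1) * _ = _; ring

lemma uNonneg (P : ℤ) (hP : 0 < P) : ∀ n, 0 ≤ lucasU P (-1) n := by
  intro n
  induction n using Nat.twoStepInduction with
  | zero => norm_num [lucasU]
  | one => norm_num [lucasU]
  | more n ih1 ih2 => rw [uRec]; positivity

lemma hLV (P : ℤ) : ∀ n, 2 * lucasU P (-1) (n+1) = P * lucasU P (-1) n + lucasV P (-1) n := by
  intro n
  induction n using Nat.twoStepInduction with
  | zero => simp only [lucasU, lucasV]; ring
  | one => simp only [lucasU, lucasV]; ring
  | more n ih1 ih2 =>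
    linear_combination 2 * uRec P (n+1) - vRec P n + ih1 + P * ih2 - P * uRec P n

lemma hLU (P : ℤ) : ∀ n, 2 * lucasV P (-1) (n+1) = P * lucasV P (-1) n + (P^2+4) * lucasU P (-1) n := by
  intro n
  induction n using Nat.twoStepInduction with
  | zero => simp only [lucasU, lucasV]; ring
  | one => simp only [lucasU, lucasV]; ring
  | more n ih1 ih2 =>
    linear_combination 2 * vRec P (n+1) - P * vRec P n - (P^2+4) * uRec P n + ih1 + P * ih2

lemma hS (P : ℤ) : ∀ n, lucasV P (-1) n ^ 2 - (P^2+4) * lucasU P (-1) n ^ 2 = 4 * (-1)^n := by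
  intro n
  induction n with
  | zero => norm_num [lucasU, lucasV]
  | succ n ih =>
    have h1 := hLV P n
    have h2 := hLU P n
    have e1 : 4 * lucasV P (-1) (n+1)^2 = (P * lucasV P (-1) n + (P^2+4) * lucasU P (-1) n)^2 := by
      linear_combination (2 * lucasV P (-1) (n+1) + P * lucasV P (-1) n + (P^2+4) * lucasU P (-1) n) * h2
    have e2 : 4 * lucasU P (-1) (n+1)^2 = (P * lucasU P (-1) n + lucasV P (-1) n)^2 := by
      linear_combination (2 * lucasU P (-1) (n+1) + P * lucasU P (-1) n + lucasV P (-1) n) * h1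
    have e3 : 4 * (lucasV P (-1) (n+1)^2 - (P^2+4) * lucasU P (-1) (n+1)^2) = -4 * (4 * (-1)^n) := by
      linear_combination e1 - (P^2+4) * e2 + (-4) * ih
    rw [pow_succ (-1 : ℤ) n]
    linarith

lemma descend (P : ℤ) (hP : 0 < P) :
    ∀ y x : ℕ, (x : ℤ) ^ 2 - (P ^ 2 + 4) * (y : ℤ) ^ 2 = -4 →
    ∃ k : ℕ, (x : ℤ) = lucasV P (-1) (2 * k + 1) ∧ (y : ℤ) = lucasU P (-1) (2 * k + 1) := by
  intro y
  induction y using Nat.strong_induction_on with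
  | _ y ih =>
  intro x hx
  rcases Nat.lt_or_ge y 2 with hy | hy
  · interval_cases y
    · exfalso; push_cast at hx; nlinarith [sq_nonneg ((x:ℤ))]
    · push_cast at hx
      have h1 : ((x:ℤ) - P) * ((x:ℤ) + P) = 0 := by linear_combination hx
      have hx0 : (0:ℤ) ≤ (x:ℤ) := Int.natCast_nonneg x
      have hxP : (x:ℤ) = P := by
        rcases mul_eq_zero.mp h1 with h | h
        · linarith
        · linarith
      exact ⟨0, by simpa [lucasV, lucasU] using hxP, by simp [lucasU]⟩
  · -- main descent case, y ≥ 2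
    have hy2 : (2:ℤ) ≤ (y:ℤ) := by exact_mod_cast hy
    have hx0 : (0:ℤ) ≤ (x:ℤ) := Int.natCast_nonneg x
    -- parity
    have hprod : ((x:ℤ) - P*y) * ((x:ℤ) + P*y) = 4*((y:ℤ)^2 - 1) := by linear_combination hx
    have heven : Even ((x:ℤ) - P*y) := by
      have he : Even (((x:ℤ) - P*y) * ((x:ℤ) + P*y)) := by
        rw [hprod]; exact ⟨2*((y:ℤ)^2-1), by ring⟩
      rcases Int.even_mul.mp he with h | h
      · exact h
      · obtain ⟨c, hc⟩ := h
        exact ⟨c - P*y, by linarith⟩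
    obtain ⟨c, hc⟩ := heven
    set x2 : ℤ := P^2*c + x - 2*y*P with hx2def
    set y2 : ℤ := -(P*c) + y with hy2def
    have hx2 : (x:ℤ)*(P^2+2) - (y:ℤ)*P*(P^2+4) = 2*x2 := by
      rw [hx2def]; linear_combination (P^2:ℤ) * hc
    have hy2e : (y:ℤ)*(P^2+2) - (x:ℤ)*P = 2*y2 := by
      rw [hy2def]; linear_combination (-P:ℤ) * hc
    -- equation for descended solution
    have h16 : (2*x2)^2 - (P^2+4)*(2*y2)^2 = -16 := by
      rw [← hx2, ← hy2e]; linear_combination 4 * hx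
    have hE : x2^2 - (P^2+4)*y2^2 = -4 := by linarith
    -- positivity of y2
    have hs : (2*y2) * ((y:ℤ)*(P^2+2) + x*P) = 4*(y:ℤ)^2 + 4*P^2 := by
      rw [← hy2e]; linear_combination (-(P^2):ℤ) * hx
    have hpos2 : 0 < (y:ℤ)*(P^2+2) + x*P := by nlinarith
    have hy2pos : 0 < y2 := by
      by_contra h
      push_neg at h
      nlinarith
    -- y2 < y
    have hxgt : (y:ℤ)*P < x := by nlinarith
    have hy2lt : y2 < (y:ℤ) := by nlinarith
    -- apply induction hypothesis
    have hcast1 : ((x2.natAbs : ℤ))^2 = x2^2 := by rw [Int.natCast_natAbs, sq_abs]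
    have hcast2 : ((y2.toNat : ℤ)) = y2 := Int.toNat_of_nonneg hy2pos.le
    have hltnat : y2.toNat < y := by omega
    obtain ⟨k, hVk, hUk⟩ := ih y2.toNat hltnat x2.natAbs
      (by rw [hcast2]; rw [show ((x2.natAbs:ℤ))^2 = x2^2 from hcast1]; exact hE)
    rw [hcast2] at hUk
    rw [Int.natCast_natAbs] at hVk
    set m := 2*k+1 with hm
    -- reconstruction identities
    have h4x : 4*(x:ℤ) = (P^2+2)*(2*x2) + P*(P^2+4)*(2*y2) := by
      rw [← hx2, ← hy2e]; ring
    have h4y : 4*(y:ℤ) = (P^2+2)*(2*y2) + P*(2*x2) := by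
      rw [← hx2, ← hy2e]; ring
    rcases le_or_gt 0 x2 with hx2sgn | hx2sgn
    · -- x2 = V m
      have hx2V : x2 = lucasV P (-1) m := by rw [← hVk, abs_of_nonneg hx2sgn]
      refine ⟨k+1, ?_, ?_⟩
      · have h2V : 2 * lucasV P (-1) (m+2) = (P^2+2) * lucasV P (-1) m + P*(P^2+4) * lucasU P (-1) m := by
          linear_combination 2 * vRec P m + P * hLU P m
        rw [show 2*(k+1)+1 = m+2 from by rw [hm]; ring]
        rw [hx2V, hUk] at h4x
        linarith
      · have h2U : 2 * lucasU P (-1) (m+2) = (P^2+2) * lucasU P (-1) m + P * lucasV P (-1) m := by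
          linear_combination 2 * uRec P m + P * hLV P m
        rw [show 2*(k+1)+1 = m+2 from by rw [hm]; ring]
        rw [hx2V, hUk] at h4y
        linarith
    · -- x2 = -V m : contradiction
      exfalso
      have hx2V : x2 = -lucasV P (-1) m := by rw [← hVk, abs_of_neg hx2sgn]; ring
      rw [hx2V, hUk] at h4y
      have B := hLV P m
      have C := uRec P (2*k)
      rw [show 2*k+2 = m+1 from by rw [hm]] at C
      have hy4 : 4*(y:ℤ) = 4 * lucasU P (-1) m - 4*(P * lucasU P (-1) (2*k)) := by
        linear_combination h4y + 2*P*B - 4*P*C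
      have hnn : 0 ≤ P * lucasU P (-1) (2*k) := mul_nonneg hP.le (uNonneg P hP (2*k))
      rw [← hUk] at hy4
      linarith

theorem stmt_19 (P : ℤ) (hP : 0 < P) (x y : ℕ) :
    (x : ℤ) ^ 2 - (P ^ 2 + 4) * (y : ℤ) ^ 2 = -4 ↔
    ∃ k : ℕ, (x : ℤ) = lucasV P (-1) (2 * k + 1) ∧ (y : ℤ) = lucasU P (-1) (2 * k + 1) := by
  constructor
  · exact descend P hP y x
  · rintro ⟨k, hxv, hyu⟩
    rw [hxv, hyu]
    have := hS P (2*k+1)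
    have hodd : (-1 : ℤ)^(2*k+1) = -1 := Odd.neg_one_pow ⟨k, by ring⟩
    rw [hodd] at this
    linarith
end
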